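/- arXiv:2208.11634 — 14 statements merged into one kernel-verified Lean document; each statement's English description precedes it below -/
import Mathlib

section
/- Let A ∈ ℝ^{n×n}, B ∈ ℝ^{n×m}, and data matrices U0 ∈ ℝ^{m×T}, X0 ∈ ℝ^{n×T}, X1 ∈ ℝ^{n×T} satisfy X1 = A·X0 + B·U0. If K ∈ ℝ^{m×n} and G ∈ ℝ^{T×n} satisfy U0·G = K and X0·G = I, then A + B·K = X1·G. -/
open Matrix

theorem stmt_1 (n m T : ℕ)
    (A : Matrix (Fin n) (Fin n) ℝ) (B : Matrix (Fin n) (Fin m) ℝ)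
    (U0 : Matrix (Fin m) (Fin T) ℝ) (X0 X1 : Matrix (Fin n) (Fin T) ℝ)
    (hdata : X1 = A * X0 + B * U0)
    (K : Matrix (Fin m) (Fin n) ℝ) (G : Matrix (Fin T) (Fin n) ℝ)
    (hUG : U0 * G = K) (hXG : X0 * G = (1 : Matrix (Fin n) (Fin n) ℝ)) :
    A + B * K = X1 * G := by
  subst hdata hUG
  rw [Matrix.add_mul, Matrix.mul_assoc A, hXG, Matrix.mul_one, Matrix.mul_assoc]
  -- done
end

section
/- Let A ∈ ℝ^{n×n}, B ∈ ℝ^{n×m}, U0 ∈ ℝ^{m×T}, X0 ∈ ℝ^{n×T}, X1 ∈ ℝ^{n×T} satisfy X1 = A·X0 + B·U0, and suppose the stacked matrix [U0; X0] has full row rank m+n. Suppose further that there exist K ∈ ℝ^{m×n} and a matrix S ∈ ℝ^{n×n} with S ≻ 0 such that S·(A+B·K) + (A+B·K)ᵀ·S ≺ 0. Then there exists Y ∈ ℝ^{T×n} such that X1·Y + (X1·Y)ᵀ ≺ 0 and X0·Y is a symmetric positive definite matrix. -/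
/-!
Set `P = S⁻¹`. The congruence `S ↦ P S P` turns the Lyapunov inequality into
`(A + BK) P + P (A + BK)ᵀ ≺ 0`. Since `[U0; X0]` has full row rank it has a right inverse,
so some `Y` solves `[U0; X0] Y = [K P; P]`; then `X0 Y = P ≻ 0` and, by the data equation,
`X1 Y = A P + B K P = (A + BK) P`.
-/

open Matrix

theorem Matrix.exists_mul_eq_of_rank_eq_card {K m n o : Type*} [Field K] [Fintype m]
    [Fintype n] [DecidableEq n] {W : Matrix m n K} (hW : W.rank = Fintype.card m)
    (C : Matrix m o K) : ∃ Y : Matrix n o K, W * Y = C := by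
  classical
  have hsurj : LinearMap.range W.mulVecLin = ⊤ :=
    Submodule.eq_top_of_finrank_eq <| by
      rw [← Matrix.rank, hW, Module.finrank_fintype_fun_eq_card]
  obtain ⟨g, hg⟩ := W.mulVecLin.exists_rightInverse_of_surjective hsurj
  refine ⟨LinearMap.toMatrix' g * C, ?_⟩
  rw [← Matrix.mul_assoc, ← LinearMap.toMatrix'_toLin' W, ← LinearMap.toMatrix'_comp,
    Matrix.toLin'_apply', hg, LinearMap.toMatrix'_id, Matrix.one_mul]

theorem Matrix.PosDef.neg_mul_inv_add_transpose {n : Type*} [Fintype n] [DecidableEq n]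
    {S F : Matrix n n ℝ} (hS : S.PosDef) (hF : (-(S * F + Fᵀ * S)).PosDef) :
    (-(F * S⁻¹ + (F * S⁻¹)ᵀ)).PosDef := by
  have hSinv : S⁻¹ᵀ = S⁻¹ := hS.inv.isHermitian.eq
  have hdet : IsUnit S.det := (isUnit_iff_isUnit_det S).mp hS.isUnit
  have hcongr : -(F * S⁻¹ + (F * S⁻¹)ᵀ) = S⁻¹ᴴ * (-(S * F + Fᵀ * S)) * S⁻¹ := by
    rw [conjTranspose_eq_transpose_of_trivial, hSinv, transpose_mul, hSinv]
    simp only [Matrix.mul_neg, Matrix.neg_mul, Matrix.mul_add, Matrix.add_mul,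
      ← Matrix.mul_assoc, nonsing_inv_mul _ hdet, Matrix.one_mul]
    rw [Matrix.mul_assoc _ S, mul_nonsing_inv _ hdet, Matrix.mul_one]
  rw [hcongr]
  exact hF.conjTranspose_mul_mul_same
    (mulVec_injective_of_isUnit (isUnit_nonsing_inv_iff.mpr hS.isUnit))

theorem stmt_2 (n m T : ℕ)
    (A : Matrix (Fin n) (Fin n) ℝ) (B : Matrix (Fin n) (Fin m) ℝ)
    (U0 : Matrix (Fin m) (Fin T) ℝ) (X0 X1 : Matrix (Fin n) (Fin T) ℝ)
    (hdata : X1 = A * X0 + B * U0)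
    (hrank : (Matrix.fromRows U0 X0).rank = m + n)
    (hstab : ∃ (K : Matrix (Fin m) (Fin n) ℝ) (S : Matrix (Fin n) (Fin n) ℝ),
      S.PosDef ∧ (-(S * (A + B * K) + (A + B * K)ᵀ * S)).PosDef) :
    ∃ Y : Matrix (Fin T) (Fin n) ℝ,
      (-(X1 * Y + (X1 * Y)ᵀ)).PosDef ∧ (X0 * Y).PosDef := by
  obtain ⟨K, S, hS, hLyap⟩ := hstab
  have hrank' : (fromRows U0 X0).rank = Fintype.card (Fin m ⊕ Fin n) := by simpa using hrank
  obtain ⟨Y, hY⟩ := exists_mul_eq_of_rank_eq_card hrank' (fromRows (K * S⁻¹) S⁻¹)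
  obtain ⟨hU0Y, hX0Y⟩ := fromRows_inj (fromRows_mul U0 X0 Y ▸ hY)
  have hX1Y : X1 * Y = (A + B * K) * S⁻¹ := by
    rw [hdata, Matrix.add_mul, Matrix.mul_assoc, Matrix.mul_assoc, hX0Y, hU0Y,
      Matrix.add_mul, Matrix.mul_assoc]
  refine ⟨Y, ?_, ?_⟩
  · rw [hX1Y]
    exact hS.neg_mul_inv_add_transpose hLyap
  · rw [hX0Y]
    exact hS.inv
end

section
/- Let A ∈ ℝ^{n×n}, B ∈ ℝ^{n×m}, U0 ∈ ℝ^{m×T}, X0 ∈ ℝ^{n×T}, X1 ∈ ℝ^{n×T} satisfy X1 = A·X0 + B·U0. Let Y ∈ ℝ^{T×n} be such that X1·Y + (X1·Y)ᵀ ≺ 0 and X0·Y is symmetric positive definite. Set S := (X0·Y)⁻¹ and K := U0·Y·S. Then S ≻ 0 and S·(A+B·K) + (A+B·K)ᵀ·S ≺ 0; in particular A+B·K admits a quadratic Lyapunov certificate of stability. -/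
/-!
The data equation turns the closed loop into `A + B K = X₁ Y S`, because `X₀ Y S = 1`.
Since `S` is symmetric, `S (A + B K) + (A + B K)ᵀ S = S (X₁ Y + (X₁ Y)ᵀ) S`, a congruence of the
data inequality by the invertible `S`, and congruence preserves definiteness.
-/

open Matrix

variable {ι τ μ R : Type*} [Fintype ι] [Fintype τ] [Fintype μ] [CommRing R]

lemma closedLoop_eq_of_data [DecidableEq ι] {A : Matrix ι ι R} {B : Matrix ι μ R}
    {U0 : Matrix μ τ R} {X0 X1 : Matrix ι τ R} (hdata : X1 = A * X0 + B * U0)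
    {Y : Matrix τ ι R} (hP : IsUnit (X0 * Y).det) :
    A + B * (U0 * Y * (X0 * Y)⁻¹) = X1 * Y * (X0 * Y)⁻¹ := by
  have hXYinv : X0 * (Y * (X0 * Y)⁻¹) = 1 := by
    rw [← Matrix.mul_assoc, mul_nonsing_inv _ hP]
  simp only [hdata, Matrix.add_mul, Matrix.mul_assoc, hXYinv, Matrix.mul_one]

lemma Matrix.IsSymm.mul_add_transpose_mul_eq {S : Matrix ι ι R} (hS : S.IsSymm)
    (M : Matrix ι ι R) :
    S * (M * S) + (M * S)ᵀ * S = S * (M + Mᵀ) * S := by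
  rw [transpose_mul, hS.eq, Matrix.mul_add, Matrix.add_mul, Matrix.mul_assoc, Matrix.mul_assoc]

theorem stmt_3 (n m T : ℕ)
    (A : Matrix (Fin n) (Fin n) ℝ) (B : Matrix (Fin n) (Fin m) ℝ)
    (U0 : Matrix (Fin m) (Fin T) ℝ) (X0 X1 : Matrix (Fin n) (Fin T) ℝ)
    (hdata : X1 = A * X0 + B * U0)
    (Y : Matrix (Fin T) (Fin n) ℝ)
    (h1 : (-(X1 * Y + (X1 * Y)ᵀ)).PosDef)
    (h2 : (X0 * Y).PosDef)
    (S : Matrix (Fin n) (Fin n) ℝ) (hSdef : S = (X0 * Y)⁻¹)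
    (K : Matrix (Fin m) (Fin n) ℝ) (hKdef : K = U0 * Y * S) :
    S.PosDef ∧ (-(S * (A + B * K) + (A + B * K)ᵀ * S)).PosDef := by
  have hS : S.PosDef := hSdef ▸ h2.inv
  have hSsymm : S.IsSymm := hS.isHermitian
  have hclosed : A + B * K = X1 * Y * S := by
    subst hSdef hKdef
    exact closedLoop_eq_of_data hdata ((isUnit_iff_isUnit_det _).mp h2.isUnit)
  have hcongr := h1.conjTranspose_mul_mul_same (mulVec_injective_of_isUnit hS.isUnit)
  rw [hS.isHermitian.eq, Matrix.mul_neg, Matrix.neg_mul] at hcongr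
  refine ⟨hS, ?_⟩
  rwa [hclosed, hSsymm.mul_add_transpose_mul_eq]
end

section
/- Let n be a positive integer, Q ∈ ℝ^{n×n} with Q ≻ 0, and R ∈ ℝ^{n×n} an arbitrary matrix. Then there exist μ > 0 and σ > 0 such that μ·[[-Q, R],[Rᵀ, 0]] − [[−σ²·I, 0],[0, I]] ≺ 0, where [[P, R],[Rᵀ, W]] denotes the 2n×2n block matrix with the indicated n×n blocks. -/
/-!
The matrix to be shown positive definite is `[[μQ - σ²I, -μR], [-μRᵀ, I]]`, which is so iff its
Schur complement `μQ - σ²I - μ²RRᵀ` is. Since `Q ≻ 0` and `RRᵀ + I` is bounded above by a multiple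
of `I`, some `ε > 0` makes `Q - ε(RRᵀ + I) ≻ 0`; then `μ = σ = ε` turns the Schur complement into
`ε (Q - ε(RRᵀ + I))`.
-/

open Matrix
open scoped MatrixOrder ComplexOrder

namespace Matrix

variable {𝕜 n m : Type*} [RCLike 𝕜] [Fintype n] [DecidableEq n]

lemma PosDef.exists_pos_smul_one_le {A : Matrix n n 𝕜} (hA : A.PosDef) :
    ∃ c : ℝ, 0 < c ∧ c • (1 : Matrix n n 𝕜) ≤ A := by
  obtain ⟨c, hc, hle⟩ : ∃ c : ℝ, 0 < c ∧ ∀ i, c ≤ hA.1.eigenvalues i := by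
    cases isEmpty_or_nonempty n
    · exact ⟨1, one_pos, isEmptyElim⟩
    · obtain ⟨i, hi⟩ := Finite.exists_min hA.1.eigenvalues
      exact ⟨_, hA.eigenvalues_pos i, hi⟩
  refine ⟨c, hc, ?_⟩
  rw [← Algebra.algebraMap_eq_smul_one]
  refine algebraMap_le_of_le_spectrum (fun x hx => ?_) hA.1.isSelfAdjoint
  rw [hA.1.spectrum_real_eq_range_eigenvalues] at hx
  obtain ⟨i, rfl⟩ := hx
  exact hle i

lemma IsHermitian.exists_le_smul_one {A : Matrix n n 𝕜} (hA : A.IsHermitian) :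
    ∃ K : ℝ, 0 < K ∧ A ≤ K • (1 : Matrix n n 𝕜) := by
  obtain ⟨K, hK⟩ := A.finite_real_spectrum.bddAbove
  refine ⟨max K 1, by positivity, ?_⟩
  rw [← Algebra.algebraMap_eq_smul_one]
  exact le_algebraMap_of_spectrum_le (fun x hx => (hK hx).trans (le_max_left K 1))
    hA.isSelfAdjoint

lemma PosDef.exists_pos_posDef_sub_smul {A H : Matrix n n 𝕜} (hA : A.PosDef)
    (hH : H.IsHermitian) : ∃ ε : ℝ, 0 < ε ∧ (A - ε • H).PosDef := by
  obtain ⟨c, hc, hcA⟩ := hA.exists_pos_smul_one_le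
  obtain ⟨K, hK, hHK⟩ := hH.exists_le_smul_one
  refine ⟨c / (2 * K), by positivity, ?_⟩
  have hle : (c / 2) • (1 : Matrix n n 𝕜) ≤ A - (c / (2 * K)) • H := calc
    (c / 2) • (1 : Matrix n n 𝕜) = c • 1 - (c / (2 * K)) • K • 1 := by
      rw [smul_smul, ← sub_smul]
      congr 1
      field_simp
      ring
    _ ≤ A - (c / (2 * K)) • H := by gcongr
  simpa using (PosDef.one.smul (half_pos hc)).add_posSemidef (le_iff.mp hle)

theorem PosDef.posDef_fromBlocks₂₂_iff [Fintype m] [DecidableEq m] (A : Matrix m m 𝕜)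
    (B : Matrix m n 𝕜) {D : Matrix n n 𝕜} (hD : D.PosDef) :
    (fromBlocks A B Bᴴ D).PosDef ↔ (A - B * D⁻¹ * Bᴴ).PosDef := by
  have := hD.isUnit.invertible
  have hdet := det_fromBlocks₂₂ A B Bᴴ D
  rw [invOf_eq_nonsing_inv] at hdet
  have hschur := hD.fromBlocks₂₂ A B
  constructor
  · intro h
    rw [(hschur.mp h.posSemidef).posDef_iff_det_ne_zero]
    exact right_ne_zero_of_mul (hdet ▸ h.det_pos.ne')
  · intro h
    rw [(hschur.mpr h.posSemidef).posDef_iff_det_ne_zero, hdet]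
    exact mul_ne_zero hD.det_pos.ne' h.det_pos.ne'

end Matrix

theorem stmt_4_general (n : ℕ)
    (Q R : Matrix (Fin n) (Fin n) ℝ) (hQ : Q.PosDef) :
    ∃ μ σ : ℝ, 0 < μ ∧ 0 < σ ∧
      (-(μ • Matrix.fromBlocks (-Q) R Rᵀ (0 : Matrix (Fin n) (Fin n) ℝ) -
          Matrix.fromBlocks ((-(σ ^ 2)) • (1 : Matrix (Fin n) (Fin n) ℝ)) 0 0
            (1 : Matrix (Fin n) (Fin n) ℝ))).PosDef := by
  obtain ⟨ε, hε, hpos⟩ := hQ.exists_pos_posDef_sub_smul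
    ((isHermitian_mul_conjTranspose_self R).add isHermitian_one)
  refine ⟨ε, ε, hε, hε, ?_⟩
  have hblocks : -(ε • fromBlocks (-Q) R Rᵀ 0 - fromBlocks ((-(ε ^ 2)) • 1) 0 0 1) =
      fromBlocks (ε • Q - ε ^ 2 • 1) (-ε • R) (-ε • R)ᴴ 1 := by
    simp only [sub_eq_add_neg, neg_add, fromBlocks_smul, fromBlocks_neg, fromBlocks_add]
    congr 1 <;> simp [conjTranspose_eq_transpose_of_trivial]
  rw [hblocks, PosDef.posDef_fromBlocks₂₂_iff _ _ PosDef.one]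
  convert hpos.smul hε using 1
  rw [inv_one, mul_one, conjTranspose_smul, star_trivial, smul_mul_smul_comm]
  module

theorem stmt_4 (n : ℕ) (hn : 0 < n)
    (Q R : Matrix (Fin n) (Fin n) ℝ) (hQ : Q.PosDef) :
    ∃ μ σ : ℝ, 0 < μ ∧ 0 < σ ∧
      (-(μ • Matrix.fromBlocks (-Q) R Rᵀ (0 : Matrix (Fin n) (Fin n) ℝ) -
          Matrix.fromBlocks ((-(σ ^ 2)) • (1 : Matrix (Fin n) (Fin n) ℝ)) 0 0
            (1 : Matrix (Fin n) (Fin n) ℝ))).PosDef :=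
  stmt_4_general n Q R hQ
end

section
/- Let α > 0, σ > 0 and set τ := (1/α)·σ/(1+σ). Let T > 0 and let x, e : [0,T] → ℝⁿ be differentiable functions such that e(0) = 0, e′(t) = −x′(t) for all t ∈ [0,T], ‖x′(t)‖ ≤ α·(‖x(t)‖ + ‖e(t)‖) for all t ∈ [0,T], and x(t) ≠ 0 for all t ∈ [0,T]. Then ‖e(t)‖ ≤ σ·‖x(t)‖ for all t ∈ [0, min(T, τ)]. -/
/-!
Since `e' = -x'` and `e 0 = 0`, we have `e = x 0 - x`. Instead of the paper's ratio
`φ = ‖e‖ / ‖x‖`, whose comparison equation `φ' = α (1 + φ)²` is a Riccati equation, we track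
`φ / (1 + φ) = ‖e‖ / (‖x‖ + ‖e‖)`. The triangle inequality bounds its upper right Dini derivative
by `‖x'‖ / (‖x‖ + ‖e‖) ≤ α`, so it grows at most like `α t`, and `α t ≤ σ / (1 + σ)` on `[0, τ]`
is exactly `‖e‖ ≤ σ ‖x‖`.
-/

open Set Filter Topology

theorem HasDerivWithinAt.Ioi_of_Icc {E : Type*} [NormedAddCommGroup E] [NormedSpace ℝ E]
    {f : ℝ → E} {f' : E} {a b t : ℝ} (h : HasDerivWithinAt f f' (Icc a b) t) (ht : t ∈ Ico a b) :
    HasDerivWithinAt f f' (Ioi t) t :=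
  (h.mono (Ioo_subset_Icc_self.trans (Icc_subset_Icc_left ht.1))).Ioi_of_Ioo ht.2

theorem add_eq_add_of_hasDerivWithinAt_eq_neg {E : Type*} [NormedAddCommGroup E]
    [NormedSpace ℝ E] {x e x' e' : ℝ → E} {a b : ℝ}
    (hx : ∀ t ∈ Icc a b, HasDerivWithinAt x (x' t) (Icc a b) t)
    (he : ∀ t ∈ Icc a b, HasDerivWithinAt e (e' t) (Icc a b) t)
    (hee : ∀ t ∈ Icc a b, e' t = -x' t) :
    ∀ t ∈ Icc a b, e t + x t = e a + x a := by
  refine constant_of_has_deriv_right_zero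
    (fun t ht => ((he t ht).add (hx t ht)).continuousWithinAt) fun t ht => ?_
  have hsum := ((he t (Ico_subset_Icc_self ht)).add (hx t (Ico_subset_Icc_self ht))).Ioi_of_Icc ht
  rw [hee t (Ico_subset_Icc_self ht), neg_add_cancel] at hsum
  exact hsum.Ici_of_Ioi

section ErrorRatio

variable {E : Type*} [NormedAddCommGroup E] {c : E}

/-- `φ / (1 + φ)` for `φ = ‖c - p‖ / ‖p‖`, in a form that makes sense also at `p = 0`. -/
noncomputable def errorRatio (c p : E) : ℝ := ‖c - p‖ / (‖p‖ + ‖c - p‖)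

lemma norm_add_norm_sub_pos (hc : c ≠ 0) (p : E) : 0 < ‖p‖ + ‖c - p‖ :=
  (norm_pos_iff.2 hc).trans_le (by simpa using norm_add_le p (c - p))

lemma continuous_errorRatio (hc : c ≠ 0) : Continuous (errorRatio c) := by
  unfold errorRatio
  fun_prop (disch := exact fun p => (norm_add_norm_sub_pos hc p).ne')

@[simp] lemma errorRatio_self (c : E) : errorRatio c c = 0 := by simp [errorRatio]

lemma errorRatio_le_iff (hc : c ≠ 0) {σ : ℝ} (hσ : 0 < 1 + σ) (p : E) :
    errorRatio c p ≤ σ / (1 + σ) ↔ ‖c - p‖ ≤ σ * ‖p‖ := by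
  rw [errorRatio, div_le_div_iff₀ (norm_add_norm_sub_pos hc p) hσ]
  constructor <;> intro h <;> linarith

lemma errorRatio_sub_le (hc : c ≠ 0) (p q : E) :
    errorRatio c q - errorRatio c p ≤ ‖q - p‖ / (‖q‖ + ‖c - q‖) := by
  have hp := norm_add_norm_sub_pos hc p
  have hq := norm_add_norm_sub_pos hc q
  have hcq_le : ‖c - q‖ ≤ ‖c - p‖ + ‖q - p‖ := by
    simpa [norm_sub_rev q p] using norm_sub_le_norm_sub_add_norm_sub c p q
  have hq_ge : ‖p‖ - ‖q - p‖ ≤ ‖q‖ := by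
    have := norm_sub_norm_le p q
    rw [norm_sub_rev] at this
    linarith
  have hnum : ‖c - q‖ * ‖p‖ - ‖c - p‖ * ‖q‖ ≤ ‖q - p‖ * (‖p‖ + ‖c - p‖) := by
    nlinarith [mul_le_mul_of_nonneg_right hcq_le (norm_nonneg p),
      mul_le_mul_of_nonneg_left hq_ge (norm_nonneg (c - p))]
  calc errorRatio c q - errorRatio c p
      = (‖c - q‖ * ‖p‖ - ‖c - p‖ * ‖q‖) / ((‖q‖ + ‖c - q‖) * (‖p‖ + ‖c - p‖)) := by
        rw [errorRatio, errorRatio]; field_simp; ring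
    _ ≤ ‖q - p‖ * (‖p‖ + ‖c - p‖) / ((‖q‖ + ‖c - q‖) * (‖p‖ + ‖c - p‖)) := by gcongr
    _ = ‖q - p‖ / (‖q‖ + ‖c - q‖) := by field_simp

variable [NormedSpace ℝ E]

lemma eventually_slope_errorRatio_lt (hc : c ≠ 0) {x : ℝ → E} {x' : E} {s α r : ℝ}
    (hx : HasDerivWithinAt x x' (Ioi s) s) (hbound : ‖x'‖ ≤ α * (‖x s‖ + ‖c - x s‖))
    (hr : α < r) : ∀ᶠ z in 𝓝[>] s, slope (errorRatio c ∘ x) s z < r := by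
  have hslope : Tendsto (slope x s) (𝓝[>] s) (𝓝 x') :=
    (hasDerivWithinAt_iff_tendsto_slope' (lt_irrefl s)).1 hx
  have hxs : Tendsto x (𝓝[>] s) (𝓝 (x s)) := hx.continuousWithinAt
  have hlim : Tendsto (fun z => ‖slope x s z‖ / (‖x z‖ + ‖c - x z‖)) (𝓝[>] s)
      (𝓝 (‖x'‖ / (‖x s‖ + ‖c - x s‖))) :=
    hslope.norm.div (hxs.norm.add (tendsto_const_nhds.sub hxs).norm)
      (norm_add_norm_sub_pos hc _).ne'
  have hlt : ‖x'‖ / (‖x s‖ + ‖c - x s‖) < r :=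
    ((div_le_iff₀ (norm_add_norm_sub_pos hc _)).2 hbound).trans_lt hr
  filter_upwards [hlim.eventually_lt_const hlt, self_mem_nhdsWithin] with z hz hsz
  have hzs : 0 < z - s := sub_pos.2 hsz
  calc slope (errorRatio c ∘ x) s z = (errorRatio c (x z) - errorRatio c (x s)) / (z - s) :=
        slope_def_field _ _ _
    _ ≤ ‖x z - x s‖ / (‖x z‖ + ‖c - x z‖) / (z - s) := by
        gcongr; exact errorRatio_sub_le hc _ _
    _ = ‖slope x s z‖ / (‖x z‖ + ‖c - x z‖) := by
        rw [slope_def_module, norm_smul, norm_inv, Real.norm_of_nonneg hzs.le]; ring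
    _ < r := hz

lemma errorRatio_comp_le_add_mul (hc : c ≠ 0) {x x' : ℝ → E} {a b α : ℝ}
    (hcont : ContinuousOn x (Icc a b)) (hx : ∀ t ∈ Ico a b, HasDerivWithinAt x (x' t) (Ioi t) t)
    (hbound : ∀ t ∈ Ico a b, ‖x' t‖ ≤ α * (‖x t‖ + ‖c - x t‖)) :
    ∀ t ∈ Icc a b, errorRatio c (x t) ≤ errorRatio c (x a) + α * (t - a) := fun t ht =>
  image_le_of_liminf_slope_right_le_deriv_boundary (B := fun t => errorRatio c (x a) + α * (t - a))
    (B' := fun _ => α) ((continuous_errorRatio hc).comp_continuousOn hcont) (by simp) (by fun_prop)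
    (fun t _ => by simpa using ((hasDerivAt_id t).sub_const a |>.const_mul α |>.const_add
      (errorRatio c (x a))).hasDerivWithinAt)
    (fun t ht r hr => (eventually_slope_errorRatio_lt hc (hx t ht) (hbound t ht) hr).frequently) ht

end ErrorRatio

theorem stmt_6_general (n : ℕ) (α σ τ : ℝ) (hα : 0 < α) (hσ : 0 < σ)
    (hτ : τ = (1 / α) * (σ / (1 + σ)))
    (T : ℝ)
    (x e x' e' : ℝ → EuclideanSpace ℝ (Fin n))
    (hx : ∀ t ∈ Set.Icc (0 : ℝ) T, HasDerivWithinAt x (x' t) (Set.Icc 0 T) t)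
    (he : ∀ t ∈ Set.Icc (0 : ℝ) T, HasDerivWithinAt e (e' t) (Set.Icc 0 T) t)
    (he0 : e 0 = 0)
    (hee : ∀ t ∈ Set.Icc (0 : ℝ) T, e' t = -x' t)
    (hbound : ∀ t ∈ Set.Icc (0 : ℝ) T, ‖x' t‖ ≤ α * (‖x t‖ + ‖e t‖))
    (hxne : ∀ t ∈ Set.Icc (0 : ℝ) T, x t ≠ 0) :
    ∀ t ∈ Set.Icc (0 : ℝ) (min T τ), ‖e t‖ ≤ σ * ‖x t‖ := by
  intro t ⟨ht0, htτT⟩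
  have ht : t ∈ Icc 0 T := ⟨ht0, htτT.trans (min_le_left _ _)⟩
  have he_eq : ∀ s ∈ Icc 0 T, e s = x 0 - x s := fun s hs => eq_sub_of_add_eq <| by
    simpa [he0] using add_eq_add_of_hasDerivWithinAt_eq_neg hx he hee s hs
  have hc : x 0 ≠ 0 := hxne 0 ⟨le_rfl, ht0.trans ht.2⟩
  have hgrowth := errorRatio_comp_le_add_mul hc (fun s hs => (hx s hs).continuousWithinAt)
    (fun s hs => (hx s (Ico_subset_Icc_self hs)).Ioi_of_Icc hs)
    (fun s hs => he_eq s (Ico_subset_Icc_self hs) ▸ hbound s (Ico_subset_Icc_self hs)) t ht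
  rw [errorRatio_self, zero_add, sub_zero] at hgrowth
  have hατ : α * t ≤ σ / (1 + σ) := calc
    α * t ≤ α * τ := mul_le_mul_of_nonneg_left (htτT.trans (min_le_right _ _)) hα.le
    _ = σ / (1 + σ) := by rw [hτ]; field_simp
  rw [he_eq t ht, ← errorRatio_le_iff hc (by linarith)]
  exact hgrowth.trans hατ

theorem stmt_6 (n : ℕ) (α σ τ : ℝ) (hα : 0 < α) (hσ : 0 < σ)
    (hτ : τ = (1 / α) * (σ / (1 + σ)))
    (T : ℝ) (hT : 0 < T)
    (x e x' e' : ℝ → EuclideanSpace ℝ (Fin n))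
    (hx : ∀ t ∈ Set.Icc (0 : ℝ) T, HasDerivWithinAt x (x' t) (Set.Icc 0 T) t)
    (he : ∀ t ∈ Set.Icc (0 : ℝ) T, HasDerivWithinAt e (e' t) (Set.Icc 0 T) t)
    (he0 : e 0 = 0)
    (hee : ∀ t ∈ Set.Icc (0 : ℝ) T, e' t = -x' t)
    (hbound : ∀ t ∈ Set.Icc (0 : ℝ) T, ‖x' t‖ ≤ α * (‖x t‖ + ‖e t‖))
    (hxne : ∀ t ∈ Set.Icc (0 : ℝ) T, x t ≠ 0) :
    ∀ t ∈ Set.Icc (0 : ℝ) (min T τ), ‖e t‖ ≤ σ * ‖x t‖ :=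
  stmt_6_general n α σ τ hα hσ hτ T x e x' e' hx he he0 hee hbound hxne
end

section
/- Let S ∈ ℝ^{n×n} with S ≻ 0, F, H ∈ ℝ^{n×n}, and μ > 0, σ > 0 be such that μ·[[S·F + Fᵀ·S, S·H],[(S·H)ᵀ, 0]] − [[−σ²·I, 0],[0, I]] ≺ 0 (a 2n×2n block matrix inequality). Then there exist c₁ ≥ 1 and c₂ > 0 such that for every differentiable x : [0,∞) → ℝⁿ and continuous e : [0,∞) → ℝⁿ satisfying x′(t) = F·x(t) + H·e(t) and ‖e(t)‖ ≤ σ·‖x(t)‖ for all t ≥ 0, one has ‖x(t)‖ ≤ c₁·e^{−c₂·t}·‖x(0)‖ for all t ≥ 0. -/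
open Matrix

theorem quad_upper {m : Type*} [Fintype m] (M : Matrix m m ℝ) :
    ∃ C > 0, ∀ v : m → ℝ, v ⬝ᵥ M.mulVec v ≤ C * (v ⬝ᵥ v) := by
  refine ⟨(∑ i, ∑ j, |M i j|) + 1, by positivity, fun v => ?_⟩
  have hvv : 0 ≤ v ⬝ᵥ v := by
    simp only [dotProduct]; exact Finset.sum_nonneg fun i _ => mul_self_nonneg _
  have hsq : ∀ i, v i ^ 2 ≤ v ⬝ᵥ v := fun i => by
    simpa [dotProduct, sq] using Finset.single_le_sum (f := fun j => v j * v j)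
      (fun j _ => mul_self_nonneg _) (Finset.mem_univ i)
  have key : ∀ i j, v i * (M i j * v j) ≤ |M i j| * (v ⬝ᵥ v) := by
    intro i j
    calc v i * (M i j * v j) ≤ |v i * (M i j * v j)| := le_abs_self _
    _ = |M i j| * (|v i| * |v j|) := by rw [abs_mul, abs_mul]; ring
    _ ≤ |M i j| * (v ⬝ᵥ v) := by
        refine mul_le_mul_of_nonneg_left ?_ (abs_nonneg _)
        nlinarith [hsq i, hsq j, sq_abs (v i), sq_abs (v j), abs_nonneg (v i), abs_nonneg (v j)]
  calc v ⬝ᵥ M.mulVec v = ∑ i, ∑ j, v i * (M i j * v j) := by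
        simp [dotProduct, Matrix.mulVec, Finset.mul_sum]
  _ ≤ ∑ i, ∑ j, |M i j| * (v ⬝ᵥ v) := by
        refine Finset.sum_le_sum fun i _ => Finset.sum_le_sum fun j _ => key i j
  _ = (∑ i, ∑ j, |M i j|) * (v ⬝ᵥ v) := by rw [Finset.sum_mul]; simp [Finset.sum_mul]
  _ ≤ ((∑ i, ∑ j, |M i j|) + 1) * (v ⬝ᵥ v) := by
        refine mul_le_mul_of_nonneg_right (by linarith) hvv


theorem quad_lower {m : Type*} [Fintype m] [DecidableEq m] (M : Matrix m m ℝ) (hM : M.PosDef) :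
    ∃ ε > 0, ∀ v : m → ℝ, ε * (v ⬝ᵥ v) ≤ v ⬝ᵥ M.mulVec v := by
  rcases isEmpty_or_nonempty m with hm | hm
  · exact ⟨1, one_pos, fun v => by simp [dotProduct]⟩
  · set E := EuclideanSpace ℝ m
    have hnorm : ∀ v : E, ‖v‖ = Real.sqrt ((v : m → ℝ) ⬝ᵥ v) := by
      intro v
      rw [EuclideanSpace.norm_eq]
      congr 1; simp [dotProduct, sq]
    have hcont : Continuous fun v : E => (v : m → ℝ) ⬝ᵥ M.mulVec v := by
      apply continuous_finset_sum
      intro i _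
      exact ((continuous_apply i).comp (PiLp.continuous_ofLp (p := 2) (β := fun _ : m => ℝ))).mul
        (continuous_finset_sum _ fun j _ => continuous_const.mul
          ((continuous_apply j).comp (PiLp.continuous_ofLp (p := 2) (β := fun _ : m => ℝ))))
    have hsph : (Metric.sphere (0 : E) 1).Nonempty :=
      ⟨EuclideanSpace.single (Classical.arbitrary m) (1:ℝ), by
        rw [mem_sphere_iff_norm, sub_zero, hnorm]
        have : ((EuclideanSpace.single (Classical.arbitrary m) (1:ℝ) : EuclideanSpace ℝ m) : m → ℝ) ⬝ᵥ
            (EuclideanSpace.single (Classical.arbitrary m) (1:ℝ) : EuclideanSpace ℝ m) = 1 := by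
          simp [dotProduct, EuclideanSpace.single_apply]
        rw [this, Real.sqrt_one]⟩
    obtain ⟨v₀, hv₀, hmin⟩ := (isCompact_sphere (0 : E) 1).exists_isMinOn hsph hcont.continuousOn
    have hv₀norm : ‖v₀‖ = 1 := by simpa using hv₀
    have hv₀ne : v₀ ≠ 0 := fun h => by simp [h] at hv₀norm
    have hε : 0 < (v₀ : m → ℝ) ⬝ᵥ M.mulVec v₀ := by
      have := hM.dotProduct_mulVec_pos (x := (v₀ : m → ℝ)) (fun h => hv₀ne (by simpa using congrArg (WithLp.toLp 2) h))
      simpa using this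
    refine ⟨_, hε, fun v => ?_⟩
    by_cases hv : v = 0
    · simp [hv]
    · have hvv : (0:ℝ) < v ⬝ᵥ v :=
        lt_of_le_of_ne (Finset.sum_nonneg fun i _ => mul_self_nonneg _)
          (fun h => hv (dotProduct_self_eq_zero.mp h.symm))
      set r : ℝ := Real.sqrt (v ⬝ᵥ v) with hr
      have hrpos : 0 < r := Real.sqrt_pos.mpr hvv
      have hr2 : r ^ 2 = v ⬝ᵥ v := Real.sq_sqrt hvv.le
      set u : E := r⁻¹ • WithLp.toLp 2 v with hu
      have huv : (u : m → ℝ) = r⁻¹ • v := rfl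
      have huu : (u : m → ℝ) ⬝ᵥ u = 1 := by
        rw [huv, smul_dotProduct, dotProduct_smul, smul_eq_mul, smul_eq_mul, ← hr2]
        field_simp
      have hunorm : ‖u‖ = 1 := by rw [hnorm u, huu, Real.sqrt_one]
      have humem : u ∈ Metric.sphere (0 : E) 1 := by
        simpa [mem_sphere_iff_norm] using hunorm
      have hge : (v₀ : m → ℝ) ⬝ᵥ M.mulVec v₀ ≤ (u : m → ℝ) ⬝ᵥ M.mulVec u :=
        isMinOn_iff.mp hmin u humem
      have hscale : (u : m → ℝ) ⬝ᵥ M.mulVec u = r⁻¹ ^ 2 * (v ⬝ᵥ M.mulVec v) := by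
        rw [huv, Matrix.mulVec_smul, smul_dotProduct, dotProduct_smul]
        simp [smul_eq_mul, sq]; ring
      rw [hscale] at hge
      calc ((v₀ : m → ℝ) ⬝ᵥ M.mulVec v₀) * (v ⬝ᵥ v)
          ≤ (r⁻¹ ^ 2 * (v ⬝ᵥ M.mulVec v)) * (v ⬝ᵥ v) :=
            mul_le_mul_of_nonneg_right hge hvv.le
        _ = v ⬝ᵥ M.mulVec v := by
            rw [← hr2]; field_simp


theorem key_alg (n : ℕ) (S F H : Matrix (Fin n) (Fin n) ℝ) (hsymm : Sᵀ = S) (x e : Fin n → ℝ) :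
    (F.mulVec x + H.mulVec e) ⬝ᵥ S.mulVec x + x ⬝ᵥ S.mulVec (F.mulVec x + H.mulVec e)
      = Sum.elim x e ⬝ᵥ (Matrix.fromBlocks (S * F + Fᵀ * S) (S * H) (S * H)ᵀ
          (0 : Matrix (Fin n) (Fin n) ℝ)).mulVec (Sum.elim x e) := by
  rw [Matrix.fromBlocks_mulVec, sumElim_dotProduct_sumElim]
  simp only [Matrix.add_mulVec, Matrix.mulVec_add, Matrix.zero_mulVec, add_zero,
    dotProduct_add, add_dotProduct, ← Matrix.mulVec_mulVec]
  have h2 : x ⬝ᵥ Fᵀ.mulVec (S.mulVec x) = (F.mulVec x) ⬝ᵥ (S.mulVec x) := by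
    rw [Matrix.dotProduct_mulVec, Matrix.vecMul_transpose]
  have h4 : e ⬝ᵥ (S * H)ᵀ.mulVec x = (H.mulVec e) ⬝ᵥ (S.mulVec x) := by
    rw [Matrix.dotProduct_mulVec, Matrix.vecMul_transpose, ← Matrix.mulVec_mulVec,
      Matrix.dotProduct_mulVec (H.mulVec e), ← hsymm, Matrix.vecMul_transpose, hsymm]
  simp only [Sum.elim_comp_inl, Sum.elim_comp_inr]
  rw [h2, h4]
  ring


theorem stmt_7 (n : ℕ)
    (S F H : Matrix (Fin n) (Fin n) ℝ) (hS : S.PosDef)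
    (μ σ : ℝ) (hμ : 0 < μ) (hσ : 0 < σ)
    (hLMI : (-(μ • Matrix.fromBlocks (S * F + Fᵀ * S) (S * H) (S * H)ᵀ
          (0 : Matrix (Fin n) (Fin n) ℝ) -
        Matrix.fromBlocks ((-(σ ^ 2)) • (1 : Matrix (Fin n) (Fin n) ℝ)) 0 0
          (1 : Matrix (Fin n) (Fin n) ℝ))).PosDef) :
    ∃ c₁ c₂ : ℝ, 1 ≤ c₁ ∧ 0 < c₂ ∧
      ∀ x e : ℝ → EuclideanSpace ℝ (Fin n),
        (∀ t ∈ Set.Ici (0 : ℝ),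
          HasDerivWithinAt x
            ((WithLp.toLp 2 (F.mulVec (x t)) : EuclideanSpace ℝ (Fin n)) +
              (WithLp.toLp 2 (H.mulVec (e t)) : EuclideanSpace ℝ (Fin n))) (Set.Ici 0) t) →
        ContinuousOn e (Set.Ici 0) →
        (∀ t ∈ Set.Ici (0 : ℝ), ‖e t‖ ≤ σ * ‖x t‖) →
        ∀ t ∈ Set.Ici (0 : ℝ),
          ‖x t‖ ≤ c₁ * Real.exp (-c₂ * t) * ‖x 0‖ := by
  obtain ⟨ε, hε, hlow⟩ := quad_lower _ hLMI
  obtain ⟨C, hC, hup⟩ := quad_upper S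
  obtain ⟨εS, hεS, hlowS⟩ := quad_lower S hS
  set N : Matrix (Fin n ⊕ Fin n) (Fin n ⊕ Fin n) ℝ :=
    Matrix.fromBlocks (S * F + Fᵀ * S) (S * H) (S * H)ᵀ 0 with hN
  set k : ℝ := ε / (μ * C) with hk
  have hkpos : 0 < k := div_pos hε (mul_pos hμ hC)
  set c₁ : ℝ := max 1 (Real.sqrt (C / εS)) with hc₁
  refine ⟨c₁, k / 2, le_max_left _ _, by positivity, ?_⟩
  intro x e hx hecont hbound
  have hnd : ∀ v : EuclideanSpace ℝ (Fin n), ‖v‖ ^ 2 = (v : Fin n → ℝ) ⬝ᵥ v := by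
    intro v
    rw [EuclideanSpace.norm_eq, Real.sq_sqrt (Finset.sum_nonneg fun i _ => sq_nonneg _)]
    simp [dotProduct, sq]
  set L : EuclideanSpace ℝ (Fin n) →L[ℝ] EuclideanSpace ℝ (Fin n) :=
    LinearMap.toContinuousLinearMap
      { toFun := fun v => WithLp.toLp 2 (S.mulVec v)
        map_add' := fun a b => by simp [Matrix.mulVec_add]
        map_smul' := fun c a => by simp [Matrix.mulVec_smul] } with hL
  have hLapp : ∀ v : EuclideanSpace ℝ (Fin n), L v = S.mulVec v := fun _ => rfl
  have hip : ∀ a b : EuclideanSpace ℝ (Fin n),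
      (inner ℝ a b : ℝ) = (a : Fin n → ℝ) ⬝ᵥ b := by
    intro a b; simp [PiLp.inner_apply, dotProduct, mul_comm]
  set V : ℝ → ℝ := fun s => (inner ℝ (x s) (L (x s)) : ℝ) with hV
  have hVdot : ∀ s, V s = (x s : Fin n → ℝ) ⬝ᵥ S.mulVec (x s) := by
    intro s
    show (inner ℝ (x s) (L (x s)) : ℝ) = _
    rw [hip, hLapp]
  set x' : ℝ → EuclideanSpace ℝ (Fin n) := fun s =>
      (WithLp.toLp 2 (F.mulVec (x s)) : EuclideanSpace ℝ (Fin n)) +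
        (WithLp.toLp 2 (H.mulVec (e s)) : EuclideanSpace ℝ (Fin n)) with hx'
  set D : ℝ → ℝ := fun s =>
      ((inner ℝ (x s) (L (x' s)) : ℝ) + (inner ℝ (x' s) (L (x s)) : ℝ)) with hD
  have hVderiv : ∀ t ∈ Set.Ici (0:ℝ), HasDerivWithinAt V (D t) (Set.Ici 0) t := by
    intro t ht
    exact HasDerivWithinAt.inner ℝ (hx t ht)
      (L.hasFDerivAt.comp_hasDerivWithinAt t (hx t ht))
  have hderiv_le : ∀ t ∈ Set.Ici (0:ℝ), D t ≤ -k * V t := by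
    intro t ht
    set xv : Fin n → ℝ := (x t).ofLp with hxv
    set ev : Fin n → ℝ := (e t).ofLp with hev
    set w : Fin n ⊕ Fin n → ℝ := Sum.elim xv ev with hw
    have hQ : D t = w ⬝ᵥ N.mulVec w := by
      show ((inner ℝ (x t) (L (x' t)) : ℝ) + (inner ℝ (x' t) (L (x t)) : ℝ)) = _
      rw [hip, hip, hLapp, hLapp, add_comm]
      exact key_alg n S F H hS.1 xv ev
    have hbig := hlow w
    have hDw : w ⬝ᵥ (Matrix.fromBlocks ((-(σ ^ 2)) • (1 : Matrix (Fin n) (Fin n) ℝ)) 0 0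
          (1 : Matrix (Fin n) (Fin n) ℝ)).mulVec w
        = -(σ^2) * (xv ⬝ᵥ xv) + ev ⬝ᵥ ev := by
      rw [hw, Matrix.fromBlocks_mulVec, sumElim_dotProduct_sumElim]
      simp only [Sum.elim_comp_inl, Sum.elim_comp_inr, Matrix.zero_mulVec, add_zero, zero_add, Matrix.neg_mulVec,
        Matrix.smul_mulVec, Matrix.one_mulVec, dotProduct_neg, dotProduct_smul,
        smul_eq_mul]
    have hbig2 : w ⬝ᵥ (-(μ • N - Matrix.fromBlocks ((-(σ ^ 2)) • (1 : Matrix (Fin n) (Fin n) ℝ)) 0 0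
          (1 : Matrix (Fin n) (Fin n) ℝ))).mulVec w
        = -(μ * (w ⬝ᵥ N.mulVec w) - (-(σ^2) * (xv ⬝ᵥ xv) + ev ⬝ᵥ ev)) := by
      rw [Matrix.neg_mulVec, dotProduct_neg, Matrix.sub_mulVec, dotProduct_sub,
        Matrix.smul_mulVec, dotProduct_smul, smul_eq_mul, hDw]
    rw [hbig2, hw, sumElim_dotProduct_sumElim] at hbig
    have hcon : ev ⬝ᵥ ev ≤ σ^2 * (xv ⬝ᵥ xv) := by
      have h1 := hbound t ht
      have h2 : ‖e t‖^2 ≤ (σ * ‖x t‖)^2 := pow_le_pow_left₀ (norm_nonneg _) h1 2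
      rw [mul_pow, hnd, hnd] at h2
      exact h2.trans_eq (by ring)
    have hxx : (0:ℝ) ≤ xv ⬝ᵥ xv := Finset.sum_nonneg fun i _ => mul_self_nonneg _
    have hee : (0:ℝ) ≤ ev ⬝ᵥ ev := Finset.sum_nonneg fun i _ => mul_self_nonneg _
    have hVle : V t ≤ C * (xv ⬝ᵥ xv) := by rw [hVdot]; exact hup xv
    rw [hQ]
    have hQle : μ * (w ⬝ᵥ N.mulVec w) ≤ -ε * (xv ⬝ᵥ xv) := by nlinarith
    have hstep : w ⬝ᵥ N.mulVec w ≤ (-ε * (xv ⬝ᵥ xv)) / μ := by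
      rw [le_div_iff₀ hμ]; linarith [hQle, mul_comm (w ⬝ᵥ N.mulVec w) μ]
    have heq : (-ε * (xv ⬝ᵥ xv)) / μ = -k * (C * (xv ⬝ᵥ xv)) := by
      rw [hk]; field_simp
    have hfin : -k * (C * (xv ⬝ᵥ xv)) ≤ -k * V t := by
      have := mul_le_mul_of_nonneg_left hVle hkpos.le
      linarith
    linarith [hstep, heq ▸ hstep, hfin]
  -- Gronwall via antitone auxiliary function
  set g : ℝ → ℝ := fun s => V s * Real.exp (k * s) with hg
  have key : ∀ s ∈ interior (Set.Ici (0:ℝ)), ∃ d, d ≤ 0 ∧ HasDerivAt g d s := by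
    intro s hs
    rw [interior_Ici] at hs
    have hs0 : s ∈ Set.Ici (0:ℝ) := Set.mem_Ici.mpr (le_of_lt (Set.mem_Ioi.mp hs))
    have hVd : HasDerivAt V (D s) s :=
      (hVderiv s hs0).hasDerivAt (Ici_mem_nhds hs)
    have hE : HasDerivAt (fun s => Real.exp (k*s)) (Real.exp (k*s) * k) s :=
      (Real.hasDerivAt_exp (k*s)).comp s ((hasDerivAt_id s).const_mul k) |>.congr_deriv (by ring)
    refine ⟨_, ?_, hVd.mul hE⟩
    have h1 := hderiv_le s hs0
    have h2 : (0:ℝ) < Real.exp (k*s) := Real.exp_pos _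
    have h3 : D s + k * V s ≤ 0 := by linarith
    nlinarith [h3, h2]
  have hVcont : ContinuousOn V (Set.Ici 0) := fun s hs => (hVderiv s hs).continuousWithinAt
  have hganti : AntitoneOn g (Set.Ici 0) := by
    apply antitoneOn_of_deriv_nonpos (convex_Ici 0)
    · exact hVcont.mul ((Real.continuous_exp.comp (continuous_const.mul continuous_id)).continuousOn)
    · intro s hs
      obtain ⟨d, _, hd⟩ := key s hs
      exact hd.differentiableAt.differentiableWithinAt
    · intro s hs
      obtain ⟨d, hd0, hd⟩ := key s hs
      rw [hd.deriv]; exact hd0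
  intro t ht
  have hgt : g t ≤ g 0 := hganti Set.self_mem_Ici ht ht
  have hg0 : g 0 = V 0 := by show V 0 * Real.exp (k * 0) = V 0; simp
  have hVt : V t * Real.exp (k * t) ≤ V 0 := hgt.trans_eq hg0
  -- convert to norms
  have hxt2 : εS * (‖x t‖^2) ≤ V t := by rw [hnd, hVdot]; exact hlowS _
  have hV0 : V 0 ≤ C * ‖x 0‖^2 := by rw [hnd, hVdot]; exact hup _
  have hexp : (0:ℝ) < Real.exp (k * t) := Real.exp_pos _
  have hsq : ‖x t‖^2 ≤ (c₁ * Real.exp (-(k/2) * t) * ‖x 0‖)^2 := by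
    have h1 : εS * ‖x t‖^2 * Real.exp (k*t) ≤ C * ‖x 0‖^2 := by
      calc εS * ‖x t‖^2 * Real.exp (k*t) ≤ V t * Real.exp (k*t) :=
            mul_le_mul_of_nonneg_right hxt2 hexp.le
      _ ≤ V 0 := hVt
      _ ≤ C * ‖x 0‖^2 := hV0
    have h2 : ‖x t‖^2 ≤ (C / εS) * ‖x 0‖^2 * Real.exp (-(k*t)) := by
      rw [Real.exp_neg]
      have h1' : ‖x t‖^2 * Real.exp (k*t) ≤ (C/εS) * ‖x 0‖^2 := by
        have h1'' := mul_le_mul_of_nonneg_left h1 (inv_pos.mpr hεS).le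
        calc ‖x t‖^2 * Real.exp (k*t) = εS⁻¹ * (εS * ‖x t‖^2 * Real.exp (k*t)) := by
              field_simp
        _ ≤ εS⁻¹ * (C * ‖x 0‖^2) := h1''
        _ = (C/εS) * ‖x 0‖^2 := by rw [div_eq_mul_inv]; ring
      calc ‖x t‖^2 = (‖x t‖^2 * Real.exp (k*t)) * (Real.exp (k*t))⁻¹ := by field_simp
      _ ≤ (C/εS) * ‖x 0‖^2 * (Real.exp (k*t))⁻¹ :=
          mul_le_mul_of_nonneg_right h1' (inv_pos.mpr hexp).le
    have hc₁sq : C / εS ≤ c₁^2 := by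
      have h0 : 0 ≤ C / εS := by positivity
      have : Real.sqrt (C/εS) ≤ c₁ := le_max_right _ _
      nlinarith [Real.sq_sqrt h0, Real.sqrt_nonneg (C/εS)]
    have hexpsq : (Real.exp (-(k/2) * t))^2 = Real.exp (-(k*t)) := by
      rw [sq, ← Real.exp_add]; ring_nf
    calc ‖x t‖^2 ≤ (C / εS) * ‖x 0‖^2 * Real.exp (-(k*t)) := h2
    _ ≤ c₁^2 * ‖x 0‖^2 * Real.exp (-(k*t)) := by
        apply mul_le_mul_of_nonneg_right _ (Real.exp_pos _).le
        exact mul_le_mul_of_nonneg_right hc₁sq (sq_nonneg _)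
    _ = (c₁ * Real.exp (-(k/2) * t) * ‖x 0‖)^2 := by rw [mul_pow, mul_pow, hexpsq]; ring
  have hb : (0:ℝ) ≤ c₁ * Real.exp (-(k/2) * t) * ‖x 0‖ := by positivity
  calc ‖x t‖ = Real.sqrt (‖x t‖^2) := by rw [Real.sqrt_sq (norm_nonneg _)]
  _ ≤ Real.sqrt ((c₁ * Real.exp (-(k/2) * t) * ‖x 0‖)^2) := Real.sqrt_le_sqrt hsq
  _ = c₁ * Real.exp (-(k/2) * t) * ‖x 0‖ := Real.sqrt_sq hb
end

section
/- Let A ∈ ℝ^{n×n}, B ∈ ℝ^{n×m}, and matrices U0 ∈ ℝ^{m×T}, X0 ∈ ℝ^{n×T}, X1 ∈ ℝ^{n×T}, D0 ∈ ℝ^{n×T} satisfy X1 = A·X0 + B·U0 + D0. If K ∈ ℝ^{m×n} and G ∈ ℝ^{T×n} satisfy U0·G = K and X0·G = I, then A + B·K = (X1 − D0)·G. -/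
open Matrix

theorem stmt_8 (n m T : ℕ)
    (A : Matrix (Fin n) (Fin n) ℝ) (B : Matrix (Fin n) (Fin m) ℝ)
    (U0 : Matrix (Fin m) (Fin T) ℝ) (X0 X1 D0 : Matrix (Fin n) (Fin T) ℝ)
    (hdata : X1 = A * X0 + B * U0 + D0)
    (K : Matrix (Fin m) (Fin n) ℝ) (G : Matrix (Fin T) (Fin n) ℝ)
    (hUG : U0 * G = K) (hXG : X0 * G = (1 : Matrix (Fin n) (Fin n) ℝ)) :
    A + B * K = (X1 - D0) * G := by
  subst hdata
  rw [add_sub_cancel_right, Matrix.add_mul, Matrix.mul_assoc, Matrix.mul_assoc, hUG, hXG, Matrix.mul_one]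
end

section
/- Let X1 ∈ ℝ^{n×T}, Ω ∈ ℝ^{n×n} symmetric, and Δ ∈ ℝ^{n×s}. Suppose there exist ε > 0 and Y ∈ ℝ^{T×n} such that the (n+T)×(n+T) block matrix [[X1·Y + (X1·Y)ᵀ + Ω + ε·Δ·Δᵀ, Yᵀ],[Y, −ε·I_T]] is negative definite. Then for every D ∈ ℝ^{n×T} with D·Dᵀ ⪯ Δ·Δᵀ, one has (X1 − D)·Y + Yᵀ·(X1 − D)ᵀ + Ω ≺ 0. -/
/-!
Taking the Schur complement of the block `ε • 1` of the negated LMI matrix turns the LMI into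
`S := -(X1 * Y + (X1 * Y)ᵀ + Ω + ε • Δ * Δᵀ) - ε⁻¹ • Yᵀ * Y ≻ 0`. The target matrix is then
`S + ε • (Δ * Δᵀ - D * Dᵀ) + ε⁻¹ • (ε • Dᵀ + Y)ᵀ * (ε • Dᵀ + Y)`,
a positive definite matrix plus two positive semidefinite ones.
-/

open Matrix

namespace Matrix

variable {m n R : Type*} [Fintype m] [Fintype n]

theorem PosDef.schur_complement₂₂ [DecidableEq n] [CommRing R] [PartialOrder R] [StarRing R]
    {A : Matrix m m R} {B : Matrix m n R} {D : Matrix n n R} [Invertible D]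
    (hM : (fromBlocks A B Bᴴ D).PosDef) : (A - B * D⁻¹ * Bᴴ).PosDef := by
  have hD : D.IsHermitian := by
    simpa using (isHermitian_fromBlocks_iff.mp hM.isHermitian).2.2.2
  rw [posDef_iff_dotProduct_mulVec] at hM ⊢
  refine ⟨(IsHermitian.fromBlocks₂₂ A B hD).mp hM.1, fun x hx => ?_⟩
  have h := hM.2 (x := x ⊕ᵥ -((D⁻¹ * Bᴴ) *ᵥ x))
    fun h => hx (by simpa using congrArg (· ∘ Sum.inl) h)
  rwa [dotProduct_mulVec, schur_complement_eq₂₂ A B _ _ hD, add_neg_cancel, dotProduct_zero,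
    zero_add, ← dotProduct_mulVec] at h

theorem posSemidef_young {ε : ℝ} (hε : 0 < ε) (P : Matrix m n ℝ) (Q : Matrix n m ℝ) :
    (ε • (P * Pᵀ) + ε⁻¹ • (Qᵀ * Q) + (P * Q + Qᵀ * Pᵀ)).PosSemidef := by
  have hsquare : ε • (P * Pᵀ) + ε⁻¹ • (Qᵀ * Q) + (P * Q + Qᵀ * Pᵀ)
      = ε⁻¹ • ((ε • Pᵀ + Q)ᵀ * (ε • Pᵀ + Q)) := by
    simp only [transpose_add, transpose_smul, transpose_transpose, Matrix.add_mul,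
      Matrix.mul_add, Matrix.smul_mul, Matrix.mul_smul]
    match_scalars <;> field_simp
  rw [hsquare]
  exact (posSemidef_conjTranspose_mul_self _).smul (inv_nonneg.mpr hε.le)

end Matrix

theorem stmt_10_general (n T s : ℕ)
    (X1 : Matrix (Fin n) (Fin T) ℝ)
    (Ω : Matrix (Fin n) (Fin n) ℝ)
    (Δ : Matrix (Fin n) (Fin s) ℝ)
    (ε : ℝ) (hε : 0 < ε) (Y : Matrix (Fin T) (Fin n) ℝ)
    (hLMI : (-(Matrix.fromBlocks
        (X1 * Y + (X1 * Y)ᵀ + Ω + ε • (Δ * Δᵀ)) Yᵀ Y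
        (-(ε • (1 : Matrix (Fin T) (Fin T) ℝ))))).PosDef) :
    ∀ D : Matrix (Fin n) (Fin T) ℝ, (Δ * Δᵀ - D * Dᵀ).PosSemidef →
      (-((X1 - D) * Y + Yᵀ * (X1 - D)ᵀ + Ω)).PosDef := by
  intro D hD
  let E : Matrix (Fin T) (Fin T) ℝ := ε • 1
  have hE : (ε⁻¹ • 1) * E = 1 := by simp [E, smul_smul, mul_inv_cancel₀ hε.ne']
  have : Invertible E := invertibleOfLeftInverse E _ hE
  have hschur : (-(X1 * Y + (X1 * Y)ᵀ + Ω + ε • (Δ * Δᵀ)) - ε⁻¹ • (Yᵀ * Y)).PosDef := by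
    have hblocks : -(fromBlocks (X1 * Y + (X1 * Y)ᵀ + Ω + ε • (Δ * Δᵀ)) Yᵀ Y (-E)) =
        fromBlocks (-(X1 * Y + (X1 * Y)ᵀ + Ω + ε • (Δ * Δᵀ))) (-Yᵀ) (-Yᵀ)ᴴ E := by
      simp [fromBlocks_neg]
    have h := PosDef.schur_complement₂₂ (hblocks ▸ hLMI)
    simpa [inv_eq_left_inv hE, E] using h
  have hsplit : -((X1 - D) * Y + Yᵀ * (X1 - D)ᵀ + Ω) =
      (-(X1 * Y + (X1 * Y)ᵀ + Ω + ε • (Δ * Δᵀ)) - ε⁻¹ • (Yᵀ * Y)) +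
        ε • (Δ * Δᵀ - D * Dᵀ) + (ε • (D * Dᵀ) + ε⁻¹ • (Yᵀ * Y) + (D * Y + Yᵀ * Dᵀ)) := by
    simp only [transpose_sub, transpose_mul, Matrix.sub_mul, Matrix.mul_sub, smul_sub]
    abel
  rw [hsplit]
  exact (hschur.add_posSemidef (hD.smul hε.le)).add_posSemidef (posSemidef_young hε D Y)

theorem stmt_10 (n T s : ℕ)
    (X1 : Matrix (Fin n) (Fin T) ℝ)
    (Ω : Matrix (Fin n) (Fin n) ℝ) (hΩ : Ω.IsSymm)
    (Δ : Matrix (Fin n) (Fin s) ℝ)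
    (ε : ℝ) (hε : 0 < ε) (Y : Matrix (Fin T) (Fin n) ℝ)
    (hLMI : (-(Matrix.fromBlocks
        (X1 * Y + (X1 * Y)ᵀ + Ω + ε • (Δ * Δᵀ)) Yᵀ Y
        (-(ε • (1 : Matrix (Fin T) (Fin T) ℝ))))).PosDef) :
    ∀ D : Matrix (Fin n) (Fin T) ℝ, (Δ * Δᵀ - D * Dᵀ).PosSemidef →
      (-((X1 - D) * Y + Yᵀ * (X1 - D)ᵀ + Ω)).PosDef :=
  stmt_10_general n T s X1 Ω Δ ε hε Y hLMI
end

section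
/- Let A ∈ ℝ^{n×n}, B ∈ ℝ^{n×m}, U0 ∈ ℝ^{m×T}, X0, X1, D0 ∈ ℝ^{n×T}, Δ ∈ ℝ^{n×s}, and Ω ∈ ℝ^{n×n} with Ω ≻ 0. Suppose: (i) X1 = A·X0 + B·U0 + D0 and D0·D0ᵀ ⪯ Δ·Δᵀ; (ii) there exist ε > 0 and Y ∈ ℝ^{T×n} such that the block matrix [[X1·Y + (X1·Y)ᵀ + Ω + ε·Δ·Δᵀ, Yᵀ],[Y, −ε·I_T]] is negative definite and X0·Y is symmetric positive definite. Let K := U0·Y·(X0·Y)⁻¹. Then there exist c₁ ≥ 1, c₂ > 0 and c₃ > 0 such that for every bounded continuous d : [0,∞) → ℝⁿ and every differentiable x : [0,∞) → ℝⁿ with x′(t) = (A+B·K)·x(t) + d(t) for all t ≥ 0, one has ‖x(t)‖ ≤ c₁·e^{−c₂·t}·‖x(0)‖ + c₃·sup_{s∈[0,t]}‖d(s)‖ for all t ≥ 0. -/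
/-!
With `Q := X₀ Y ≻ 0` and `F := A + B K`, the data equation gives `F Q = (X₁ - D₀) Y`. Testing the
LMI against the vectors `(v, -D₀ᵀ v)` and using `D₀ D₀ᵀ ⪯ Δ Δᵀ` yields `F Q + Q Fᵀ ≺ 0`, so
`P := Q⁻¹` solves the Lyapunov inequality `P F + Fᵀ P ≺ 0`. Along a solution of `ẋ = F x + d` the
function `V = xᵀ P x` then satisfies `V̇ ≤ -β V + γ ‖d‖²` (Young's inequality on the cross term
`2 xᵀ P d`), and Grönwall's inequality together with `m ‖x‖² ≤ V ≤ M ‖x‖²` gives the ISS estimate.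
-/

open Matrix Set Real
open scoped RealInnerProductSpace

section Lyapunov

variable {E : Type*} [NormedAddCommGroup E] [InnerProductSpace ℝ E]

def IsExpISS (F : E →L[ℝ] E) : Prop :=
  ∃ c₁ c₂ c₃ : ℝ, 1 ≤ c₁ ∧ 0 < c₂ ∧ 0 < c₃ ∧
    ∀ d x : ℝ → E, ContinuousOn d (Ici 0) → (∃ Cd : ℝ, ∀ t ∈ Ici (0 : ℝ), ‖d t‖ ≤ Cd) →
      (∀ t ∈ Ici (0 : ℝ), HasDerivWithinAt x (F (x t) + d t) (Ici 0) t) →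
      ∀ t ∈ Ici (0 : ℝ), ‖x t‖ ≤ c₁ * exp (-c₂ * t) * ‖x 0‖ +
        c₃ * sSup ((fun u => ‖d u‖) '' Icc 0 t)

lemma exists_pos_mul_sq_norm_le_inner_self [FiniteDimensional ℝ E] (T : E →L[ℝ] E)
    (hT : ∀ v ≠ 0, 0 < ⟪v, T v⟫) : ∃ m > 0, ∀ v, m * ‖v‖ ^ 2 ≤ ⟪v, T v⟫ := by
  rcases subsingleton_or_nontrivial E with hE | hE
  · exact ⟨1, one_pos, fun v => by simp [Subsingleton.elim v 0]⟩
  obtain ⟨u, hu, hmin⟩ := (isCompact_sphere (0 : E) 1).exists_isMinOn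
    (NormedSpace.sphere_nonempty.mpr zero_le_one)
    (continuous_id.inner (𝕜 := ℝ) T.continuous).continuousOn
  have hu1 : ‖u‖ = 1 := by simpa using hu
  refine ⟨⟪u, T u⟫, hT u (norm_ne_zero_iff.mp (by simp [hu1])), fun v => ?_⟩
  rcases eq_or_ne v 0 with rfl | hv
  · simp
  have hv' : ‖v‖ ≠ 0 := norm_ne_zero_iff.mpr hv
  have hmem : ‖v‖⁻¹ • v ∈ Metric.sphere (0 : E) 1 := by
    simp [norm_smul, hv']
  have hscale : ⟪‖v‖⁻¹ • v, T (‖v‖⁻¹ • v)⟫ = ‖v‖⁻¹ ^ 2 * ⟪v, T v⟫ := by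
    rw [map_smul, real_inner_smul_left, real_inner_smul_right]; ring
  have hle : ⟪u, T u⟫ ≤ ⟪‖v‖⁻¹ • v, T (‖v‖⁻¹ • v)⟫ := hmin hmem
  rw [hscale] at hle
  calc ⟪u, T u⟫ * ‖v‖ ^ 2 ≤ ‖v‖⁻¹ ^ 2 * ⟪v, T v⟫ * ‖v‖ ^ 2 := by gcongr
    _ = ⟪v, T v⟫ := by field_simp

lemma HasDerivWithinAt.inner_apply_self {P : E →L[ℝ] E} (hP : (P : E →ₗ[ℝ] E).IsSymmetric)
    {x : ℝ → E} {x' : E} {s : Set ℝ} {t : ℝ} (hx : HasDerivWithinAt x x' s t) :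
    HasDerivWithinAt (fun τ => ⟪x τ, P (x τ)⟫) (2 * ⟪x t, P x'⟫) s t := by
  refine (hx.inner ℝ (P.hasFDerivAt.comp_hasDerivWithinAt t hx)).congr_deriv ?_
  have : ⟪x', P (x t)⟫ = ⟪x t, P x'⟫ := by
    rw [real_inner_comm, ← ContinuousLinearMap.coe_coe P, hP]
  simp only [Function.comp_apply, this]
  ring

lemma inner_apply_le_of_opNorm_le {P : E →L[ℝ] E} {M : ℝ} (hPM : ‖P‖ ≤ M) (v z : E) :
    ⟪v, P z⟫ ≤ M * ‖v‖ * ‖z‖ := calc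
  ⟪v, P z⟫ ≤ ‖v‖ * ‖P z‖ := real_inner_le_norm _ _
  _ ≤ ‖v‖ * (M * ‖z‖) := by gcongr; exact P.le_of_opNorm_le hPM z
  _ = M * ‖v‖ * ‖z‖ := by ring

lemma two_inner_apply_add_le {F P : E →L[ℝ] E} {α M : ℝ} (hα : 0 < α) (hM : 0 < M)
    (hPM : ‖P‖ ≤ M) (hdec : ∀ v, α * ‖v‖ ^ 2 ≤ -(2 * ⟪v, P (F v)⟫)) (v w : E) :
    2 * ⟪v, P (F v + w)⟫ ≤ -(α / (2 * M)) * ⟪v, P v⟫ + 2 * M ^ 2 / α * ‖w‖ ^ 2 := by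
  have hYoung : 2 * (M * ‖v‖ * ‖w‖) ≤ α / 2 * ‖v‖ ^ 2 + 2 * M ^ 2 / α * ‖w‖ ^ 2 := by
    have := sq_nonneg (α * ‖v‖ - 2 * M * ‖w‖)
    field_simp
    nlinarith
  have hV : α / (2 * M) * ⟪v, P v⟫ ≤ α / 2 * ‖v‖ ^ 2 := calc
    α / (2 * M) * ⟪v, P v⟫ ≤ α / (2 * M) * (M * ‖v‖ * ‖v‖) := by
      gcongr; exact inner_apply_le_of_opNorm_le hPM v v
    _ = α / 2 * ‖v‖ ^ 2 := by field_simp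
  rw [map_add, inner_add_right]
  linarith [hdec v, inner_apply_le_of_opNorm_le hPM v w]

lemma le_exp_mul_add_div_of_deriv_le {V V' : ℝ → ℝ} {β c t : ℝ} (hβ : 0 < β) (hc : 0 ≤ c)
    (ht : 0 ≤ t) (hVc : ContinuousOn V (Icc 0 t))
    (hV : ∀ τ ∈ Ico 0 t, HasDerivWithinAt V (V' τ) (Ici τ) τ)
    (hV' : ∀ τ ∈ Ico 0 t, V' τ ≤ -β * V τ + c) :
    V t ≤ exp (-β * t) * V 0 + c / β := by
  have h := le_gronwallBound_of_liminf_deriv_right_le hVc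
    (fun τ hτ _ hr => (hV τ hτ).liminf_right_slope_le hr) le_rfl hV' t ⟨ht, le_rfl⟩
  rw [gronwallBound_of_K_ne_0 (neg_ne_zero.mpr hβ.ne'), sub_zero] at h
  have : 0 ≤ c / β * exp (-β * t) := by positivity
  calc V t ≤ V 0 * exp (-β * t) + c / -β * (exp (-β * t) - 1) := h
    _ ≤ exp (-β * t) * V 0 + c / β := by rw [div_neg]; linarith

lemma le_sqrt_mul_add_sqrt_mul_of_sq_le {a b e D m M c : ℝ} (ha : 0 ≤ a) (hb : 0 ≤ b)
    (he : 0 ≤ e) (hD : 0 ≤ D) (hm : 0 < m) (hM : 0 ≤ M) (hc : 0 ≤ c)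
    (h : m * a ^ 2 ≤ M * e ^ 2 * b ^ 2 + c * D ^ 2) :
    a ≤ √(M / m) * e * b + √(c / m) * D := by
  have h1 : √(M / m) ^ 2 = M / m := sq_sqrt (by positivity)
  have h2 : √(c / m) ^ 2 = c / m := sq_sqrt (by positivity)
  have h3 : a ^ 2 ≤ (√(M / m) * e * b + √(c / m) * D) ^ 2 := calc
    a ^ 2 ≤ (M * e ^ 2 * b ^ 2 + c * D ^ 2) / m := by rw [le_div_iff₀ hm]; linarith
    _ = √(M / m) ^ 2 * e ^ 2 * b ^ 2 + √(c / m) ^ 2 * D ^ 2 := by rw [h1, h2]; ring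
    _ ≤ (√(M / m) * e * b + √(c / m) * D) ^ 2 := by
      nlinarith [mul_nonneg (mul_nonneg (mul_nonneg (sqrt_nonneg (M / m)) he) hb)
        (mul_nonneg (sqrt_nonneg (c / m)) hD)]
  exact (pow_le_pow_iff_left₀ ha (by positivity) two_ne_zero).mp h3

theorem isExpISS_of_lyapunov {F P : E →L[ℝ] E} (hP : (P : E →ₗ[ℝ] E).IsSymmetric) {m α : ℝ}
    (hm : 0 < m) (hα : 0 < α) (hPm : ∀ v, m * ‖v‖ ^ 2 ≤ ⟪v, P v⟫)
    (hdec : ∀ v, α * ‖v‖ ^ 2 ≤ -(2 * ⟪v, P (F v)⟫)) : IsExpISS F := by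
  set M := max ‖P‖ m
  have hM : 0 < M := lt_max_of_lt_right hm
  set β := α / (2 * M)
  set γ := 2 * M ^ 2 / α
  refine ⟨√(M / m), β / 2, √(γ / β / m), one_le_sqrt.mpr ((one_le_div hm).mpr (le_max_right _ _)),
    by positivity, by positivity, ?_⟩
  rintro d x - ⟨Cd, hCd⟩ hx t (ht : 0 ≤ t)
  set D := sSup ((fun u => ‖d u‖) '' Icc 0 t)
  have hdD : ∀ τ ∈ Icc 0 t, ‖d τ‖ ≤ D := fun τ hτ =>
    le_csSup ⟨Cd, by rintro _ ⟨u, hu, rfl⟩; exact hCd u hu.1⟩ ⟨τ, hτ, rfl⟩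
  have hD : 0 ≤ D := (norm_nonneg _).trans (hdD 0 ⟨le_rfl, ht⟩)
  have hVx := fun τ (hτ : 0 ≤ τ) => (hx τ hτ).inner_apply_self hP
  have hV : ⟪x t, P (x t)⟫ ≤ exp (-β * t) * ⟪x 0, P (x 0)⟫ + γ * D ^ 2 / β := by
    refine le_exp_mul_add_div_of_deriv_le (by positivity) (by positivity) ht
      (fun τ hτ => (hVx τ hτ.1).continuousWithinAt.mono Icc_subset_Ici_self)
      (fun τ hτ => (hVx τ hτ.1).mono (Ici_subset_Ici.mpr hτ.1)) fun τ hτ => ?_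
    refine (two_inner_apply_add_le hα hM (le_max_left _ _) hdec _ _).trans ?_
    gcongr
    exact hdD τ (Ico_subset_Icc_self hτ)
  have hexp : exp (-(β / 2) * t) ^ 2 = exp (-β * t) := by rw [← exp_nat_mul]; ring_nf
  refine le_sqrt_mul_add_sqrt_mul_of_sq_le (norm_nonneg _) (norm_nonneg _) (exp_nonneg _) hD hm
    hM.le (by positivity) ?_
  calc m * ‖x t‖ ^ 2 ≤ ⟪x t, P (x t)⟫ := hPm _
    _ ≤ exp (-β * t) * ⟪x 0, P (x 0)⟫ + γ * D ^ 2 / β := hV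
    _ ≤ exp (-β * t) * (M * ‖x 0‖ * ‖x 0‖) + γ * D ^ 2 / β := by
      gcongr; exact inner_apply_le_of_opNorm_le (le_max_left _ _) _ _
    _ = M * exp (-(β / 2) * t) ^ 2 * ‖x 0‖ ^ 2 + γ / β * D ^ 2 := by rw [hexp]; ring

end Lyapunov

section Matrix

variable {n : Type*} [Fintype n] [DecidableEq n]

lemma posDef_neg_add_transpose_of_lmi {T s : Type*} [Fintype T] [Fintype s] [DecidableEq T]
    {X1 D0 : Matrix n T ℝ} {Δ : Matrix n s ℝ} {Ω : Matrix n n ℝ} (hΩ : Ω.PosSemidef)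
    (hD0 : (Δ * Δᵀ - D0 * D0ᵀ).PosSemidef) {ε : ℝ} (hε : 0 ≤ ε) {Y : Matrix T n ℝ}
    (hLMI : (-(fromBlocks (X1 * Y + (X1 * Y)ᵀ + Ω + ε • (Δ * Δᵀ)) Yᵀ Y
        (-(ε • (1 : Matrix T T ℝ))))).PosDef) :
    (-((X1 - D0) * Y + ((X1 - D0) * Y)ᵀ)).PosDef := by
  set E : Matrix (n ⊕ T) n ℝ := fromRows 1 (-D0ᵀ)
  have hE : Function.Injective E.mulVec := fun v w h => by
    simpa [E, fromRows_mulVec] using congrArg (fun z => z ∘ Sum.inl) h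
  have key : -((X1 - D0) * Y + ((X1 - D0) * Y)ᵀ) =
      Eᴴ * -(fromBlocks (X1 * Y + (X1 * Y)ᵀ + Ω + ε • (Δ * Δᵀ)) Yᵀ Y
        (-(ε • (1 : Matrix T T ℝ)))) * E + (Ω + ε • (Δ * Δᵀ - D0 * D0ᵀ)) := by
    simp only [E, conjTranspose_eq_transpose_of_trivial, transpose_fromRows, Matrix.mul_neg,
      Matrix.neg_mul, fromCols_mul_fromBlocks, fromCols_mul_fromRows]
    simp only [transpose_one, transpose_neg, transpose_transpose, transpose_mul, Matrix.one_mul,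
      Matrix.mul_one, Matrix.sub_mul, smul_sub, smul_neg, Matrix.neg_mul,
      Matrix.add_mul, Matrix.mul_smul, Matrix.smul_mul, transpose_sub]
    abel
  rw [key]
  exact (hLMI.conjTranspose_mul_mul_same hE).add_posSemidef (hΩ.add (hD0.smul hε))

lemma Matrix.PosDef.exists_pos_mul_sq_norm_le {P : Matrix n n ℝ} (hP : P.PosDef) :
    ∃ m > 0, ∀ v : EuclideanSpace ℝ n, m * ‖v‖ ^ 2 ≤ ⟪v, toEuclideanCLM (𝕜 := ℝ) P v⟫ :=
  exists_pos_mul_sq_norm_le_inner_self _ fun v hv => by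
    simpa [inner_toEuclideanCLM] using
      hP.dotProduct_mulVec_pos (x := WithLp.ofLp v) (by simpa using hv)

lemma Matrix.PosDef.posDef_neg_inv_mul_add_transpose_mul_inv {Q F : Matrix n n ℝ}
    (hQ : Q.PosDef) (h : (-(F * Q + Q * Fᵀ)).PosDef) : (-(Q⁻¹ * F + Fᵀ * Q⁻¹)).PosDef := by
  have hdet : IsUnit Q.det := hQ.det_pos.ne'.isUnit
  convert h.conjTranspose_mul_mul_same (mulVec_injective_of_isUnit hQ.inv.isUnit) using 1
  simp only [hQ.inv.1.eq, Matrix.mul_neg, Matrix.neg_mul, Matrix.mul_add, Matrix.add_mul,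
    Matrix.mul_assoc, mul_nonsing_inv _ hdet, nonsing_inv_mul_cancel_left _ _ hdet, Matrix.mul_one]

theorem isExpISS_toEuclideanCLM_of_posDef {F P : Matrix n n ℝ} (hP : P.PosDef)
    (hS : (-(P * F + Fᵀ * P)).PosDef) : IsExpISS (toEuclideanCLM (𝕜 := ℝ) F) := by
  obtain ⟨m, hm, hPm⟩ := hP.exists_pos_mul_sq_norm_le
  obtain ⟨α, hα, hSα⟩ := hS.exists_pos_mul_sq_norm_le
  refine isExpISS_of_lyapunov (P := toEuclideanCLM (𝕜 := ℝ) P) ?_ hm hα hPm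
    fun v => (hSα v).trans_eq ?_
  · rw [coe_toEuclideanCLM_eq_toEuclideanLin]
    exact isSymmetric_toEuclideanLin_iff.mpr hP.1
  · have hPt : Pᵀ = P := hP.1
    have hsymm : v ⬝ᵥ (Fᵀ * P) *ᵥ v = v ⬝ᵥ (P * F) *ᵥ v := by
      rw [← mulVec_mulVec, ← mulVec_mulVec, dotProduct_mulVec _ Fᵀ, vecMul_transpose,
        dotProduct_comm, dotProduct_mulVec _ P, ← mulVec_transpose, hPt]
    simp only [inner_toEuclideanCLM, ofLp_toEuclideanCLM, neg_mulVec, add_mulVec, dotProduct_neg,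
      dotProduct_add, hsymm, mulVec_mulVec]
    ring

end Matrix

theorem stmt_12 (n m T s : ℕ)
    (A : Matrix (Fin n) (Fin n) ℝ) (B : Matrix (Fin n) (Fin m) ℝ)
    (U0 : Matrix (Fin m) (Fin T) ℝ) (X0 X1 D0 : Matrix (Fin n) (Fin T) ℝ)
    (Δ : Matrix (Fin n) (Fin s) ℝ)
    (Ω : Matrix (Fin n) (Fin n) ℝ) (hΩ : Ω.PosDef)
    (hdata : X1 = A * X0 + B * U0 + D0)
    (hD0 : (Δ * Δᵀ - D0 * D0ᵀ).PosSemidef)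
    (ε : ℝ) (hε : 0 < ε) (Y : Matrix (Fin T) (Fin n) ℝ)
    (hLMI : (-(Matrix.fromBlocks
        (X1 * Y + (X1 * Y)ᵀ + Ω + ε • (Δ * Δᵀ)) Yᵀ Y
        (-(ε • (1 : Matrix (Fin T) (Fin T) ℝ))))).PosDef)
    (hX0Y : (X0 * Y).PosDef)
    (K : Matrix (Fin m) (Fin n) ℝ) (hKdef : K = U0 * Y * (X0 * Y)⁻¹) :
    ∃ c₁ c₂ c₃ : ℝ, 1 ≤ c₁ ∧ 0 < c₂ ∧ 0 < c₃ ∧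
      ∀ d x : ℝ → EuclideanSpace ℝ (Fin n),
        ContinuousOn d (Set.Ici 0) →
        (∃ Cd : ℝ, ∀ t ∈ Set.Ici (0 : ℝ), ‖d t‖ ≤ Cd) →
        (∀ t ∈ Set.Ici (0 : ℝ),
          HasDerivWithinAt x
            ((EuclideanSpace.equiv (Fin n) ℝ).symm ((A + B * K).mulVec (x t)) + d t)
            (Set.Ici 0) t) →
        ∀ t ∈ Set.Ici (0 : ℝ),
          ‖x t‖ ≤ c₁ * Real.exp (-c₂ * t) * ‖x 0‖ +
            c₃ * sSup ((fun u => ‖d u‖) '' Set.Icc 0 t) := by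
  have hQ : IsUnit (X0 * Y).det := hX0Y.det_pos.ne'.isUnit
  have hFQ : (A + B * K) * (X0 * Y) = (X1 - D0) * Y := by
    have hK : K * (X0 * Y) = U0 * Y := by
      rw [hKdef, Matrix.mul_assoc, nonsing_inv_mul _ hQ, Matrix.mul_one]
    rw [hdata, add_sub_cancel_right, Matrix.add_mul, Matrix.mul_assoc B, hK, Matrix.add_mul,
      Matrix.mul_assoc, Matrix.mul_assoc]
  have hdual := posDef_neg_add_transpose_of_lmi hΩ.posSemidef hD0 hε.le hLMI
  have hQt : (X0 * Y)ᵀ = X0 * Y := hX0Y.1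
  rw [← hFQ, transpose_mul, hQt] at hdual
  exact isExpISS_toEuclideanCLM_of_posDef hX0Y.inv
    (hX0Y.posDef_neg_inv_mul_add_transpose_mul_inv hdual)
end

section
/- Let S ∈ ℝ^{n×n} with S ≻ 0, Ω ∈ ℝ^{n×n} symmetric, X1 ∈ ℝ^{n×T}, L ∈ ℝ^{T×n}, Δ ∈ ℝ^{n×s}, and μ, ε, σ > 0. Suppose the 2n×2n block matrix inequality [[−μ·S·Ω·S/2 + 2σ²·I + ε⁻¹·μ²·S·Δ·Δᵀ·S, μ·S·X1·L],[(μ·S·X1·L)ᵀ, −I + ε·Lᵀ·L]] ⪯ 0 holds. Then for every D ∈ ℝ^{n×T} with D·Dᵀ ⪯ Δ·Δᵀ, the block matrix inequality [[−μ·S·Ω·S/2 + 2σ²·I, μ·S·(X1−D)·L],[(μ·S·(X1−D)·L)ᵀ, −I]] ⪯ 0 holds. -/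
/-!
Subtracting the target from the hypothesis leaves
`[[ε⁻¹μ² SΔΔᵀS, μ SDL], [(μ SDL)ᵀ, ε LᵀL]]`. Splitting `ΔΔᵀ = DDᵀ + (ΔΔᵀ - DDᵀ)`, this is the
Gram matrix of `(μ/√ε) DᵀS` and `√ε L` (a block form of Young's inequality
`2ab ≤ ε⁻¹a² + εb²`) plus the positive semidefinite corner block `ε⁻¹μ² S(ΔΔᵀ - DDᵀ)S`.
-/

open Matrix

namespace Matrix

variable {m k p R : Type*} [Fintype m] [Fintype k] [Fintype p]
  [Ring R] [PartialOrder R] [StarRing R]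

theorem posSemidef_fromBlocks_mul_conjTranspose [StarOrderedRing R]
    (U : Matrix m k R) (V : Matrix k p R) :
    (fromBlocks (U * Uᴴ) (U * V) (Vᴴ * Uᴴ) (Vᴴ * V)).PosSemidef := by
  simpa [conjTranspose_fromCols_eq_fromRows_conjTranspose, fromRows_mul_fromCols]
    using posSemidef_conjTranspose_mul_self (fromCols Uᴴ V)

theorem PosSemidef.fromBlocks_zero [DecidableEq m] {A : Matrix m m R}
    (hA : A.PosSemidef) : (fromBlocks A 0 0 (0 : Matrix p p R)).PosSemidef := by
  convert hA.conjTranspose_mul_mul_same (fromCols (1 : Matrix m m R) (0 : Matrix m p R)) using 1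
  simp only [conjTranspose_fromCols_eq_fromRows_conjTranspose, fromRows_mul, mul_fromCols,
    fromCols_fromRows_eq_fromBlocks]
  simp

theorem posSemidef_fromBlocks_young {ε : ℝ} (hε : 0 < ε) (μ : ℝ)
    (P : Matrix m k ℝ) (Q : Matrix k p ℝ) :
    (fromBlocks ((ε⁻¹ * μ ^ 2) • (P * Pᵀ)) (μ • (P * Q)) (μ • (P * Q))ᵀ
      (ε • (Qᵀ * Q))).PosSemidef := by
  have hsq : √ε * √ε = ε := Real.mul_self_sqrt hε.le
  have hsqrt_ne : √ε ≠ 0 := (Real.sqrt_pos.2 hε).ne'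
  have h₁₁ : μ / √ε * (μ / √ε) = ε⁻¹ * μ ^ 2 := by field_simp; rw [Real.sq_sqrt hε.le]
  have h₁₂ : √ε * (μ / √ε) = μ := by field_simp
  convert posSemidef_fromBlocks_mul_conjTranspose ((μ / √ε) • P) (√ε • Q) using 1
  simp only [conjTranspose_eq_transpose_of_trivial, transpose_smul, transpose_mul, Matrix.smul_mul,
    Matrix.mul_smul, smul_smul]
  rw [h₁₁, h₁₂, mul_comm (μ / √ε), h₁₂, hsq]

end Matrix

theorem stmt_13_general (n T s : ℕ)
    (S Ω : Matrix (Fin n) (Fin n) ℝ) (hS : S.PosDef)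
    (X1 : Matrix (Fin n) (Fin T) ℝ) (L : Matrix (Fin T) (Fin n) ℝ)
    (Δ : Matrix (Fin n) (Fin s) ℝ)
    (μ ε σ : ℝ) (hε : 0 < ε)
    (hLMI : (-(Matrix.fromBlocks
        (-((μ / 2) • (S * Ω * S)) + (2 * σ ^ 2) • (1 : Matrix (Fin n) (Fin n) ℝ) +
          (ε⁻¹ * μ ^ 2) • (S * Δ * Δᵀ * S))
        (μ • (S * X1 * L))
        (μ • (S * X1 * L))ᵀ
        (-(1 : Matrix (Fin n) (Fin n) ℝ) + ε • (Lᵀ * L)))).PosSemidef) :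
    ∀ D : Matrix (Fin n) (Fin T) ℝ, (Δ * Δᵀ - D * Dᵀ).PosSemidef →
      (-(Matrix.fromBlocks
        (-((μ / 2) • (S * Ω * S)) + (2 * σ ^ 2) • (1 : Matrix (Fin n) (Fin n) ℝ))
        (μ • (S * (X1 - D) * L))
        (μ • (S * (X1 - D) * L))ᵀ
        (-(1 : Matrix (Fin n) (Fin n) ℝ)))).PosSemidef := by
  intro D hD
  have hSt : Sᵀ = S := by simpa using hS.isHermitian.eq
  have hyoung := posSemidef_fromBlocks_young hε μ (S * D) L
  have hgap : (fromBlocks ((ε⁻¹ * μ ^ 2) • (S * (Δ * Δᵀ - D * Dᵀ) * S)) 0 0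
      (0 : Matrix (Fin n) (Fin n) ℝ)).PosSemidef := by
    refine PosSemidef.fromBlocks_zero (PosSemidef.smul ?_ ?_)
    · simpa [hSt] using hD.mul_mul_conjTranspose_same S
    · positivity
  convert (hLMI.add hyoung).add hgap using 1
  simp only [fromBlocks_neg, fromBlocks_add, transpose_smul, transpose_mul, transpose_sub, hSt]
  refine fromBlocks_inj.2 ⟨?_, ?_, ?_, ?_⟩ <;>
    simp only [Matrix.mul_sub, Matrix.sub_mul, Matrix.mul_assoc, smul_sub, add_zero] <;> abel

theorem stmt_13 (n T s : ℕ)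
    (S Ω : Matrix (Fin n) (Fin n) ℝ) (hS : S.PosDef) (hΩ : Ω.IsSymm)
    (X1 : Matrix (Fin n) (Fin T) ℝ) (L : Matrix (Fin T) (Fin n) ℝ)
    (Δ : Matrix (Fin n) (Fin s) ℝ)
    (μ ε σ : ℝ) (hμ : 0 < μ) (hε : 0 < ε) (hσ : 0 < σ)
    (hLMI : (-(Matrix.fromBlocks
        (-((μ / 2) • (S * Ω * S)) + (2 * σ ^ 2) • (1 : Matrix (Fin n) (Fin n) ℝ) +
          (ε⁻¹ * μ ^ 2) • (S * Δ * Δᵀ * S))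
        (μ • (S * X1 * L))
        (μ • (S * X1 * L))ᵀ
        (-(1 : Matrix (Fin n) (Fin n) ℝ) + ε • (Lᵀ * L)))).PosSemidef) :
    ∀ D : Matrix (Fin n) (Fin T) ℝ, (Δ * Δᵀ - D * Dᵀ).PosSemidef →
      (-(Matrix.fromBlocks
        (-((μ / 2) • (S * Ω * S)) + (2 * σ ^ 2) • (1 : Matrix (Fin n) (Fin n) ℝ))
        (μ • (S * (X1 - D) * L))
        (μ • (S * (X1 - D) * L))ᵀ
        (-(1 : Matrix (Fin n) (Fin n) ℝ)))).PosSemidef :=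
  stmt_13_general n T s S Ω hS X1 L Δ μ ε σ hε hLMI
end

section
/- Let ᾱ > 0, σ > 0, ν̄ > 0 and set τ̄ := (1/ᾱ)·σ/(1+σ). Let T > 0 and let x, e : [0,T] → ℝⁿ be differentiable functions such that e(0) = 0, e′(t) = −x′(t) for all t ∈ [0,T], and ‖x′(t)‖ ≤ ᾱ·(‖x(t)‖ + ‖e(t)‖ + ν̄) for all t ∈ [0,T]. Then ‖e(t)‖ ≤ σ·(‖x(t)‖ + ν̄) for all t ∈ [0, min(T, τ̄)]. -/
/-!
Write `φ = ‖e‖ / (‖x‖ + ν̄)` for the triggering ratio. The comparison `φ' ≤ ᾱ (1 + φ)²` becomes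
linear for `ψ = φ / (1 + φ) = ‖e‖ / (‖e‖ + ‖x‖ + ν̄)`: since `e + x` is constant, `‖e‖` and
`‖x‖ + ν̄` each move by at most `‖Δx‖`, so `Δψ ≤ ‖Δx‖ / (‖e‖ + ‖x‖ + ν̄)`, and the growth bound on
`x'` turns this into a right Dini derivative `ψ' ≤ ᾱ`. Hence `ψ(t) ≤ ᾱ t`, which is
`φ(t) ≤ ᾱ t / (1 - ᾱ t)`, the solution of `φ' = ᾱ (1 + φ)²`, and `ᾱ t ≤ σ / (1 + σ)` up to `τ̄`.
-/

open Set Filter Topology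

theorem div_add_sub_div_add_le {u₁ v₁ u₂ v₂ D : ℝ} (hu₂ : 0 ≤ u₂) (hv₂ : 0 ≤ v₂)
    (hw₁ : 0 < u₁ + v₁) (hw₂ : 0 < u₂ + v₂) (hu : u₂ - u₁ ≤ D) (hv : v₁ - v₂ ≤ D) :
    u₂ / (u₂ + v₂) - u₁ / (u₁ + v₁) ≤ D / (u₁ + v₁) := by
  have hnum : u₂ * v₁ - u₁ * v₂ ≤ D * (u₂ + v₂) := by nlinarith
  rw [div_sub_div _ _ hw₂.ne' hw₁.ne', div_le_div_iff₀ (by positivity) hw₁]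
  nlinarith

theorem div_add_le_div_one_add_iff {u v σ : ℝ} (hu : 0 ≤ u) (hv : 0 < v) (hσ : -1 < σ) :
    u / (u + v) ≤ σ / (1 + σ) ↔ u ≤ σ * v := by
  rw [div_le_div_iff₀ (by positivity) (by linarith)]
  constructor <;> intro h <;> linarith

section

variable {E : Type*} [NormedAddCommGroup E]

noncomputable def eventRatio (ν : ℝ) (x e : E) : ℝ := ‖e‖ / (‖e‖ + (‖x‖ + ν))

theorem eventRatio_sub_le {ν : ℝ} (hν : 0 < ν) {x₁ x₂ e₁ e₂ : E} (h : e₂ + x₂ = e₁ + x₁) :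
    eventRatio ν x₂ e₂ - eventRatio ν x₁ e₁ ≤ ‖x₂ - x₁‖ / (‖e₁‖ + (‖x₁‖ + ν)) := by
  have he : e₂ - e₁ = x₁ - x₂ := by rw [sub_eq_sub_iff_add_eq_add, h, add_comm]
  refine div_add_sub_div_add_le (norm_nonneg _) (by positivity) (by positivity) (by positivity)
    ?_ ?_
  · calc ‖e₂‖ - ‖e₁‖ ≤ ‖e₂ - e₁‖ := norm_sub_norm_le _ _
      _ = ‖x₂ - x₁‖ := by rw [he, norm_sub_rev]
  · linarith [norm_sub_norm_le x₁ x₂, norm_sub_rev x₁ x₂]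

theorem add_eq_add_of_hasDerivWithinAt_neg [NormedSpace ℝ E] {a b : ℝ} {x e x' : ℝ → E}
    (hx : ∀ t ∈ Icc a b, HasDerivWithinAt x (x' t) (Icc a b) t)
    (he : ∀ t ∈ Icc a b, HasDerivWithinAt e (-x' t) (Icc a b) t) :
    ∀ t ∈ Icc a b, e t + x t = e a + x a := by
  refine constant_of_has_deriv_right_zero
    (fun t ht => ((he t ht).add (hx t ht)).continuousWithinAt) fun t ht => ?_
  have hsum := (he t (Ico_subset_Icc_self ht)).add (hx t (Ico_subset_Icc_self ht))
  rw [neg_add_cancel] at hsum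
  exact hsum.mono_of_mem_nhdsWithin (Icc_mem_nhdsGE_of_mem ht)

theorem eventRatio_le_add_mul [NormedSpace ℝ E] {ν α a b : ℝ} (hν : 0 < ν) {x e x' : ℝ → E}
    (hx : ∀ t ∈ Icc a b, HasDerivWithinAt x (x' t) (Icc a b) t)
    (hxe : ∀ t ∈ Icc a b, e t + x t = e a + x a)
    (hbound : ∀ t ∈ Ico a b, ‖x' t‖ ≤ α * (‖x t‖ + ‖e t‖ + ν)) :
    ∀ t ∈ Icc a b, eventRatio ν (x t) (e t) ≤ eventRatio ν (x a) (e a) + α * (t - a) := by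
  have hxc : ContinuousOn x (Icc a b) := fun t ht => (hx t ht).continuousWithinAt
  have hec : ContinuousOn e (Icc a b) :=
    (continuousOn_const.sub hxc).congr fun t ht => eq_sub_of_add_eq (hxe t ht)
  have hpos : ∀ t, 0 < ‖e t‖ + (‖x t‖ + ν) := fun t => by positivity
  refine image_le_of_liminf_slope_right_le_deriv_boundary (B' := fun _ => α) ?_ (by simp)
    (by fun_prop) (fun t _ => ?_) fun s hs r hr => ?_
  · exact hec.norm.div (hec.norm.add (hxc.norm.add continuousOn_const)) fun t _ => (hpos t).ne'
  · simpa using (((hasDerivWithinAt_id t (Ici t)).sub_const a).const_mul α).const_add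
      (eventRatio ν (x a) (e a))
  · have hxs : HasDerivWithinAt x (x' s) (Ioi s) s :=
      ((hx s (Ico_subset_Icc_self hs)).mono_of_mem_nhdsWithin (Icc_mem_nhdsGE_of_mem hs)).Ioi_of_Ici
    have hlt : ‖x' s‖ < r * (‖e s‖ + (‖x s‖ + ν)) :=
      (hbound s hs).trans_lt (by nlinarith [hpos s])
    refine Eventually.frequently ?_
    filter_upwards [hxs.limsup_norm_slope_le hlt, Ioo_mem_nhdsGT hs.2, self_mem_nhdsWithin]
      with z hz hzb hzs
    have hsz : 0 < z - s := sub_pos.2 hzs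
    have hdiff := eventRatio_sub_le hν (x₁ := x s) (e₁ := e s) (x₂ := x z) (e₂ := e z)
      ((hxe z ⟨hs.1.trans hzs.le, hzb.2.le⟩).trans (hxe s (Ico_subset_Icc_self hs)).symm)
    rw [Real.norm_of_nonneg hsz.le, inv_mul_lt_iff₀ hsz] at hz
    rw [slope_def_field, div_lt_iff₀ hsz]
    calc eventRatio ν (x z) (e z) - eventRatio ν (x s) (e s)
        ≤ ‖x z - x s‖ / (‖e s‖ + (‖x s‖ + ν)) := hdiff
      _ < r * (z - s) := by rw [div_lt_iff₀ (hpos s)]; linarith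

end

theorem stmt_14_general (n : ℕ) (α σ ν τ : ℝ) (hα : 0 < α) (hσ : 0 < σ) (hν : 0 < ν)
    (hτ : τ = (1 / α) * (σ / (1 + σ)))
    (T : ℝ)
    (x e x' e' : ℝ → EuclideanSpace ℝ (Fin n))
    (hx : ∀ t ∈ Set.Icc (0 : ℝ) T, HasDerivWithinAt x (x' t) (Set.Icc 0 T) t)
    (he : ∀ t ∈ Set.Icc (0 : ℝ) T, HasDerivWithinAt e (e' t) (Set.Icc 0 T) t)
    (he0 : e 0 = 0)
    (hee : ∀ t ∈ Set.Icc (0 : ℝ) T, e' t = -x' t)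
    (hbound : ∀ t ∈ Set.Icc (0 : ℝ) T, ‖x' t‖ ≤ α * (‖x t‖ + ‖e t‖ + ν)) :
    ∀ t ∈ Set.Icc (0 : ℝ) (min T τ), ‖e t‖ ≤ σ * (‖x t‖ + ν) := by
  have hconst : ∀ t ∈ Icc 0 T, e t + x t = e 0 + x 0 :=
    add_eq_add_of_hasDerivWithinAt_neg hx fun t ht => hee t ht ▸ he t ht
  intro t ht
  have hratio := eventRatio_le_add_mul hν hx hconst (fun s hs => hbound s (Ico_subset_Icc_self hs))
    t ⟨ht.1, ht.2.trans (min_le_left _ _)⟩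
  have hατ : α * t ≤ σ / (1 + σ) := by
    calc α * t ≤ α * τ := mul_le_mul_of_nonneg_left (ht.2.trans (min_le_right _ _)) hα.le
      _ = σ / (1 + σ) := by rw [hτ, ← mul_assoc, mul_one_div_cancel hα.ne', one_mul]
  simp only [eventRatio, he0, norm_zero, zero_div, zero_add, sub_zero] at hratio
  exact (div_add_le_div_one_add_iff (norm_nonneg _) (by positivity) (by linarith)).1
    (hratio.trans hατ)

theorem stmt_14 (n : ℕ) (α σ ν τ : ℝ) (hα : 0 < α) (hσ : 0 < σ) (hν : 0 < ν)
    (hτ : τ = (1 / α) * (σ / (1 + σ)))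
    (T : ℝ) (hT : 0 < T)
    (x e x' e' : ℝ → EuclideanSpace ℝ (Fin n))
    (hx : ∀ t ∈ Set.Icc (0 : ℝ) T, HasDerivWithinAt x (x' t) (Set.Icc 0 T) t)
    (he : ∀ t ∈ Set.Icc (0 : ℝ) T, HasDerivWithinAt e (e' t) (Set.Icc 0 T) t)
    (he0 : e 0 = 0)
    (hee : ∀ t ∈ Set.Icc (0 : ℝ) T, e' t = -x' t)
    (hbound : ∀ t ∈ Set.Icc (0 : ℝ) T, ‖x' t‖ ≤ α * (‖x t‖ + ‖e t‖ + ν)) :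
    ∀ t ∈ Set.Icc (0 : ℝ) (min T τ), ‖e t‖ ≤ σ * (‖x t‖ + ν) :=
  stmt_14_general n α σ ν τ hα hσ hν hτ T x e x' e' hx he he0 hee hbound
end

section
/- Let A ∈ ℝ^{n×n}, B ∈ ℝ^{n×m}, K ∈ ℝ^{m×n}, and σ > 0. Define τ_m(σ) := (1/‖A‖)·log((σ/(1+σ))·‖A‖/max{‖A+B·K‖, 1} + 1) if A ≠ 0, and τ_m(σ) := (σ/(1+σ))·(1/max{‖A+B·K‖, 1}) if A = 0. Let T > 0, d : [0,T] → ℝⁿ continuous, and x : [0,T] → ℝⁿ differentiable with x′(t) = A·x(t) + B·K·x(0) + d(t) for all t ∈ [0,T]. Then for every t ∈ [0, min(T, τ_m(σ))], ‖x(0) − x(t)‖ ≤ σ·(‖x(t)‖ + sup_{s∈[0,t]}‖d(s)‖). -/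
open Matrix

/-- The operator norm on square matrices induced by the Euclidean norm
(spectral norm). -/
noncomputable def l2opNorm {n : ℕ} (A : Matrix (Fin n) (Fin n) ℝ) : ℝ :=
  ‖(Matrix.toEuclideanCLM (𝕜 := ℝ) A :
      EuclideanSpace ℝ (Fin n) →L[ℝ] EuclideanSpace ℝ (Fin n))‖

lemma l2opNorm_nonneg {n : ℕ} (A : Matrix (Fin n) (Fin n) ℝ) : 0 ≤ l2opNorm A :=
  norm_nonneg _

lemma l2opNorm_pos {n : ℕ} {A : Matrix (Fin n) (Fin n) ℝ} (hA : A ≠ 0) : 0 < l2opNorm A := by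
  rw [l2opNorm, norm_pos_iff]
  intro h0
  exact hA ((Matrix.toEuclideanCLM (𝕜 := ℝ)).injective (by simp only [map_zero]; exact h0))

lemma l2opNorm_zero {n : ℕ} : l2opNorm (0 : Matrix (Fin n) (Fin n) ℝ) = 0 := by
  rw [l2opNorm, map_zero, norm_zero]

lemma euclid_mulVec_eq {n : ℕ} (A : Matrix (Fin n) (Fin n) ℝ) (v : EuclideanSpace ℝ (Fin n)) :
    (EuclideanSpace.equiv (Fin n) ℝ).symm (A.mulVec v) = Matrix.toEuclideanCLM (𝕜 := ℝ) A v := rfl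

lemma euclid_mulVec_le {n : ℕ} (A : Matrix (Fin n) (Fin n) ℝ) (v : EuclideanSpace ℝ (Fin n)) :
    ‖Matrix.toEuclideanCLM (𝕜 := ℝ) A v‖ ≤ l2opNorm A * ‖v‖ :=
  (Matrix.toEuclideanCLM (𝕜 := ℝ) A).le_opNorm v

theorem stmt_16 (n m : ℕ)
    (A : Matrix (Fin n) (Fin n) ℝ) (B : Matrix (Fin n) (Fin m) ℝ)
    (K : Matrix (Fin m) (Fin n) ℝ) (σ : ℝ) (hσ : 0 < σ)
    (τm : ℝ)
    (hτm : τm = if A ≠ 0 then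
        (1 / l2opNorm A) *
          Real.log ((σ / (1 + σ)) * (l2opNorm A / max (l2opNorm (A + B * K)) 1) + 1)
      else (σ / (1 + σ)) * (1 / max (l2opNorm (A + B * K)) 1))
    (T : ℝ) (hT : 0 < T)
    (d x : ℝ → EuclideanSpace ℝ (Fin n))
    (hd : ContinuousOn d (Set.Icc 0 T))
    (hx : ∀ t ∈ Set.Icc (0 : ℝ) T,
      HasDerivWithinAt x
        ((EuclideanSpace.equiv (Fin n) ℝ).symm
            (A.mulVec (x t) + (B * K).mulVec (x 0)) + d t)
        (Set.Icc 0 T) t) :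
    ∀ t ∈ Set.Icc (0 : ℝ) (min T τm),
      ‖x 0 - x t‖ ≤ σ * (‖x t‖ + sSup ((fun u => ‖d u‖) '' Set.Icc 0 t)) := by
  intro t ht
  obtain ⟨ht0, ht1⟩ := ht
  have htT : t ≤ T := le_trans ht1 (min_le_left _ _)
  have htτ : t ≤ τm := le_trans ht1 (min_le_right _ _)
  set M : ℝ := max (l2opNorm (A + B * K)) 1 with hM
  have hM1 : (1 : ℝ) ≤ M := le_max_right _ _
  have hM0 : (0 : ℝ) < M := lt_of_lt_of_le one_pos hM1
  set r : ℝ := σ / (1 + σ) with hr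
  have hσ1 : (0 : ℝ) < 1 + σ := by linarith
  have hr0 : 0 ≤ r := div_nonneg hσ.le hσ1.le
  set D : ℝ := sSup ((fun u => ‖d u‖) '' Set.Icc 0 t) with hD
  have hsub : Set.Icc (0 : ℝ) t ⊆ Set.Icc 0 T := Set.Icc_subset_Icc le_rfl htT
  have hbdd : BddAbove ((fun u => ‖d u‖) '' Set.Icc 0 t) :=
    (isCompact_Icc.image_of_continuousOn ((hd.mono hsub).norm)).bddAbove
  have hDle : ∀ s ∈ Set.Icc (0 : ℝ) t, ‖d s‖ ≤ D :=
    fun s hs => le_csSup hbdd ⟨s, hs, rfl⟩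
  have hD0 : 0 ≤ D := le_trans (norm_nonneg _) (hDle 0 ⟨le_rfl, ht0⟩)
  -- the error function
  set e : ℝ → EuclideanSpace ℝ (Fin n) := fun s => x 0 - x s with he
  set KA : ℝ := l2opNorm A with hKA
  set ε : ℝ := l2opNorm (A + B * K) * ‖x 0‖ + D with hε
  have hε0 : 0 ≤ ε := add_nonneg (mul_nonneg (l2opNorm_nonneg _) (norm_nonneg _)) hD0
  -- derivative of e
  have hxc : ContinuousOn x (Set.Icc 0 T) := fun s hs => (hx s hs).continuousWithinAt
  have hec : ContinuousOn e (Set.Icc 0 t) :=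
    (continuousOn_const.sub hxc).mono hsub
  set e' : ℝ → EuclideanSpace ℝ (Fin n) := fun s =>
    Matrix.toEuclideanCLM (𝕜 := ℝ) A (e s)
      - Matrix.toEuclideanCLM (𝕜 := ℝ) (A + B * K) (x 0) - d s with he'
  have hederiv : ∀ s ∈ Set.Ico (0 : ℝ) t, HasDerivWithinAt e (e' s) (Set.Ici s) s := by
    intro s hs
    have hsT : s ∈ Set.Icc (0 : ℝ) T := ⟨hs.1, le_of_lt (lt_of_lt_of_le hs.2 htT)⟩
    have hx' := (hx s hsT).mono_of_mem_nhdsWithin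
      (Icc_mem_nhdsGE_of_mem ⟨hs.1, lt_of_lt_of_le hs.2 htT⟩)
    have := (hasDerivWithinAt_const s (Set.Ici s) (x 0)).sub hx'
    refine this.congr_deriv ?_
    have h1 : (EuclideanSpace.equiv (Fin n) ℝ).symm
        (A.mulVec (x s) + (B * K).mulVec (x 0))
        = Matrix.toEuclideanCLM (𝕜 := ℝ) A (x s)
          + Matrix.toEuclideanCLM (𝕜 := ℝ) (B * K) (x 0) := by
      rw [map_add]
      rfl
    rw [h1, he']
    simp only [he, map_sub, map_add, ContinuousLinearMap.add_apply]
    abel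
  -- Grönwall bound
  have hbound : ∀ s ∈ Set.Ico (0 : ℝ) t, ‖e' s‖ ≤ KA * ‖e s‖ + ε := by
    intro s hs
    have h1 : ‖e' s‖ ≤ ‖Matrix.toEuclideanCLM (𝕜 := ℝ) A (e s)‖
        + ‖Matrix.toEuclideanCLM (𝕜 := ℝ) (A + B * K) (x 0)‖ + ‖d s‖ := by
      rw [he']
      exact le_trans (norm_sub_le _ _) (by gcongr; exact norm_sub_le _ _)
    have h2 := euclid_mulVec_le A (e s)
    have h3 := euclid_mulVec_le (A + B * K) (x 0)
    have h4 := hDle s ⟨hs.1, hs.2.le⟩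
    rw [hε]
    linarith
  have he0 : ‖e 0‖ ≤ 0 := by simp [he]
  have hgron := norm_le_gronwallBound_of_norm_deriv_right_le hec hederiv he0 hbound t
    ⟨ht0, le_rfl⟩
  rw [sub_zero] at hgron
  -- bound gronwallBound 0 KA ε t by r * (‖x 0‖ + D)
  have hAM : l2opNorm (A + B * K) ≤ M := le_max_left _ _
  have key : ‖e t‖ ≤ r * (‖x 0‖ + D) := by
    have hεM : ε ≤ M * (‖x 0‖ + D) := by
      rw [hε]
      have : D ≤ M * D := le_mul_of_one_le_left hD0 hM1
      nlinarith [norm_nonneg (x 0)]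
    by_cases hA : A = 0
    · have hKA0 : KA = 0 := by rw [hKA, hA, l2opNorm_zero]
      rw [hKA0, gronwallBound_K0] at hgron
      have hτ : τm = r * (1 / M) := by rw [hτm, if_neg (by simp [hA])]
      have h5 : ε * t ≤ ε * (r * (1 / M)) := by
        apply mul_le_mul_of_nonneg_left _ hε0
        rw [← hτ]; exact htτ
      have h6 : ε * (r * (1 / M)) ≤ r * (‖x 0‖ + D) := by
        rw [show ε * (r * (1 / M)) = r * (ε / M) by ring]
        apply mul_le_mul_of_nonneg_left _ hr0
        rw [div_le_iff₀ hM0]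
        linarith [hεM]
      simp only [zero_add] at hgron
      exact le_trans hgron (le_trans h5 h6)
    · have hKApos : 0 < KA := l2opNorm_pos hA
      rw [gronwallBound_of_K_ne_0 hKApos.ne'] at hgron
      simp only [zero_mul, zero_add] at hgron
      have hτ : τm = (1 / KA) * Real.log (r * (KA / M) + 1) := by
        rw [hτm, if_pos hA]
      have harg : 0 ≤ r * (KA / M) := mul_nonneg hr0 (div_nonneg hKApos.le hM0.le)
      have hexp : Real.exp (KA * t) - 1 ≤ r * (KA / M) := by
        have h7 : KA * t ≤ Real.log (r * (KA / M) + 1) := by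
          have := mul_le_mul_of_nonneg_left htτ hKApos.le
          rw [hτ] at this
          calc KA * t ≤ KA * ((1 / KA) * Real.log (r * (KA / M) + 1)) := this
            _ = Real.log (r * (KA / M) + 1) := by field_simp
        have h8 : Real.exp (KA * t) ≤ r * (KA / M) + 1 := by
          calc Real.exp (KA * t) ≤ Real.exp (Real.log (r * (KA / M) + 1)) :=
                Real.exp_le_exp.mpr h7
            _ = r * (KA / M) + 1 := Real.exp_log (by linarith)
        linarith
      have h9 : ε / KA * (Real.exp (KA * t) - 1) ≤ ε / KA * (r * (KA / M)) := by
        apply mul_le_mul_of_nonneg_left hexp (div_nonneg hε0 hKApos.le)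
      have h10 : ε / KA * (r * (KA / M)) = r * (ε / M) := by
        field_simp
      have h11 : r * (ε / M) ≤ r * (‖x 0‖ + D) := by
        apply mul_le_mul_of_nonneg_left _ hr0
        rw [div_le_iff₀ hM0]
        linarith [hεM]
      linarith
  -- conclude
  have hx0 : ‖x 0‖ ≤ ‖x t‖ + ‖e t‖ := by
    have h := norm_sub_norm_le (x 0) (x t)
    have het : e t = x 0 - x t := rfl
    rw [het]
    linarith
  have key2 : ‖e t‖ ≤ r * (‖x t‖ + ‖e t‖ + D) := by
    refine le_trans key ?_
    apply mul_le_mul_of_nonneg_left _ hr0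
    linarith
  have hfinal : ‖e t‖ ≤ σ * (‖x t‖ + D) := by
    rw [hr] at key2
    rw [div_mul_eq_mul_div, le_div_iff₀ hσ1] at key2
    nlinarith
  exact hfinal
end

section
/- Let S ∈ ℝ^{n×n} with S ≻ 0, Ω ∈ ℝ^{n×n} with Ω ≻ 0, and F, H ∈ ℝ^{n×n} with S·F + Fᵀ·S ⪯ −S·Ω·S. Let ω₁ be the smallest eigenvalue of the symmetric matrix S·Ω·S, let ω₂ > 0 satisfy ω₂ ≥ 2·‖S·H‖, and let σ ∈ (0, ω₁/ω₂). Then there exist c₁ ≥ 1 and c₂, c₃ > 0 such that for every bounded continuous d : [0,∞) → ℝⁿ, every continuous e : [0,∞) → ℝⁿ, and every differentiable x : [0,∞) → ℝⁿ satisfying x′(t) = F·x(t) + H·e(t) + d(t) and ‖e(t)‖ ≤ σ·(‖x(t)‖ + sup_{s∈[0,t]}‖d(s)‖) for all t ≥ 0, one has ‖x(t)‖ ≤ c₁·e^{−c₂·t}·‖x(0)‖ + c₃·sup_{s∈[0,t]}‖d(s)‖ for all t ≥ 0. -/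
open Matrix

/-!
`V x = xᵀ S x` is an ISS-Lyapunov function. Along a solution,
`V' = 2 xᵀ S (F x + H e + d) ≤ -ω₁ ‖x‖² + ω₂ ‖x‖ ‖e‖ + 2 ‖S‖ ‖x‖ ‖d‖`, and the triggering bound
on `e` turns this into `V' ≤ -α ‖x‖² + γ ‖x‖ D` on `[0, t]`, where `α = ω₁ - σ ω₂ > 0`,
`γ = σ ω₂ + 2 ‖S‖` and `D` is the supremum of `‖d‖` over `[0, t]`. Young's inequality and
`m ‖x‖² ≤ V x ≤ M ‖x‖²` give `V' ≤ -(α / 2M) V + γ² D² / 2α`, and Grönwall's inequality yields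
the estimate with `c₁ = √(M/m)`, `c₂ = α / 4M` and `c₃ = √(M/m) γ / α`.
-/

open Set
open scoped RealInnerProductSpace Topology

theorem le_mul_exp_add_div_of_deriv_right_le {v v' : ℝ → ℝ} {K ε a b : ℝ} (hK : 0 < K)
    (hε : 0 ≤ ε) (hab : a ≤ b) (hv : ContinuousOn v (Icc a b))
    (hv' : ∀ s ∈ Ico a b, HasDerivWithinAt v (v' s) (Ici s) s)
    (hbound : ∀ s ∈ Ico a b, v' s ≤ -K * v s + ε) :
    v b ≤ v a * Real.exp (-K * (b - a)) + ε / K := by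
  have h := le_gronwallBound_of_liminf_deriv_right_le hv
    (fun s hs _ hr => (hv' s hs).liminf_right_slope_le hr) le_rfl hbound b ⟨hab, le_rfl⟩
  rw [gronwallBound_of_K_ne_0 (neg_ne_zero.2 hK.ne')] at h
  have hexp : 0 < Real.exp (-K * (b - a)) := Real.exp_pos _
  calc v b ≤ v a * Real.exp (-K * (b - a)) + ε / K * (1 - Real.exp (-K * (b - a))) := by
        convert h using 2; field_simp; ring
    _ ≤ v a * Real.exp (-K * (b - a)) + ε / K := by
        gcongr
        exact mul_le_of_le_one_right (div_nonneg hε hK.le) (sub_le_self _ hexp.le)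

theorem HasDerivWithinAt.inner_apply_self_of_isSymmetric {E : Type*} [NormedAddCommGroup E]
    [InnerProductSpace ℝ E] {T : E →L[ℝ] E} (hT : (T : E →ₗ[ℝ] E).IsSymmetric) {x : ℝ → E}
    {x' : E} {s : Set ℝ} {t : ℝ} (hx : HasDerivWithinAt x x' s t) :
    HasDerivWithinAt (fun u => ⟪x u, T (x u)⟫) (2 * ⟪x t, T x'⟫) s t := by
  refine (hx.inner ℝ (T.hasFDerivAt.comp_hasDerivWithinAt t hx)).congr_deriv ?_
  have h := hT x' (x t)
  rw [ContinuousLinearMap.coe_coe] at h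
  rw [Function.comp_apply, ← h, real_inner_comm]
  ring

theorem norm_le_of_two_inner_deriv_le {E : Type*} [NormedAddCommGroup E] [InnerProductSpace ℝ E]
    {T : E →L[ℝ] E} (hT : (T : E →ₗ[ℝ] E).IsSymmetric) {m M α γ D t : ℝ} (hm : 0 < m)
    (hM : 0 < M) (hlow : ∀ z, m * ‖z‖ ^ 2 ≤ ⟪z, T z⟫) (hup : ∀ z, ⟪z, T z⟫ ≤ M * ‖z‖ ^ 2)
    (hα : 0 < α) (hγ : 0 ≤ γ) (hD : 0 ≤ D) (ht : 0 ≤ t) {x f : ℝ → E}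
    (hx : ∀ s ∈ Ici (0 : ℝ), HasDerivWithinAt x (f s) (Ici 0) s)
    (hdiss : ∀ s ∈ Ico 0 t, 2 * ⟪x s, T (f s)⟫ ≤ -α * ‖x s‖ ^ 2 + γ * ‖x s‖ * D) :
    ‖x t‖ ≤ √(M / m) * (Real.exp (-(α / (4 * M)) * t) * ‖x 0‖ + γ / α * D) := by
  set v : ℝ → ℝ := fun s => ⟪x s, T (x s)⟫
  have hv : ∀ s ∈ Ici (0 : ℝ), HasDerivWithinAt v (2 * ⟪x s, T (f s)⟫) (Ici 0) s :=
    fun s hs => (hx s hs).inner_apply_self_of_isSymmetric hT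
  have hdecay : ∀ s ∈ Ico 0 t,
      2 * ⟪x s, T (f s)⟫ ≤ -(α / (2 * M)) * v s + γ ^ 2 / (2 * α) * D ^ 2 := by
    intro s hs
    have hyoung : γ * ‖x s‖ * D ≤ α / 2 * ‖x s‖ ^ 2 + γ ^ 2 / (2 * α) * D ^ 2 := by
      rw [div_mul_eq_mul_div, div_mul_eq_mul_div, div_add_div _ _ two_ne_zero (by positivity),
        le_div_iff₀ (by positivity)]
      nlinarith [sq_nonneg (α * ‖x s‖ - γ * D)]
    have hvM : α / (2 * M) * v s ≤ α / 2 * ‖x s‖ ^ 2 := by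
      calc α / (2 * M) * v s ≤ α / (2 * M) * (M * ‖x s‖ ^ 2) := by gcongr; exact hup _
        _ = α / 2 * ‖x s‖ ^ 2 := by field_simp
    linarith [hdiss s hs]
  have hgron := le_mul_exp_add_div_of_deriv_right_le (by positivity) (by positivity) ht
    (fun s hs => (hv s hs.1).continuousWithinAt.mono Icc_subset_Ici_self)
    (fun s hs => (hv s hs.1).mono (Ici_subset_Ici.2 hs.1)) hdecay
  set c := Real.exp (-(α / (4 * M)) * t)
  have hc : Real.exp (-(α / (2 * M)) * (t - 0)) = c ^ 2 := by
    rw [← Real.exp_nat_mul]; congr 1; field_simp; ring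
  have hsq : m * ‖x t‖ ^ 2 ≤ m * (M / m * (c * ‖x 0‖ + γ / α * D) ^ 2) := by
    calc m * ‖x t‖ ^ 2 ≤ v t := hlow _
      _ ≤ M * ‖x 0‖ ^ 2 * c ^ 2 + γ ^ 2 / (2 * α) * D ^ 2 / (α / (2 * M)) := by
        rw [hc] at hgron; nlinarith [hup (x 0), sq_nonneg c]
      _ ≤ M * (c * ‖x 0‖ + γ / α * D) ^ 2 := by
        field_simp
        have : 0 ≤ ‖x 0‖ * c * α * (γ * D) := by positivity
        nlinarith
      _ = m * (M / m * (c * ‖x 0‖ + γ / α * D) ^ 2) := by field_simp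
  rw [← Real.sqrt_sq (by positivity : 0 ≤ c * ‖x 0‖ + γ / α * D), ← Real.sqrt_mul (by positivity)]
  exact Real.le_sqrt_of_sq_le (le_of_mul_le_mul_left hsq hm)

section Matrix

variable {ι : Type*} [Fintype ι] [DecidableEq ι]

theorem Matrix.IsHermitian.isSymmetric_toEuclideanCLM {A : Matrix ι ι ℝ} (hA : A.IsHermitian) :
    (toEuclideanCLM (𝕜 := ℝ) A : EuclideanSpace ℝ ι →ₗ[ℝ] EuclideanSpace ℝ ι).IsSymmetric :=
  isSymmetric_toEuclideanLin_iff.2 hA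

theorem Matrix.IsHermitian.mul_norm_sq_le_inner_toEuclideanCLM {A : Matrix ι ι ℝ}
    (hA : A.IsHermitian) {c : ℝ} (hc : ∀ i, c ≤ hA.eigenvalues i) (x : EuclideanSpace ℝ ι) :
    c * ‖x‖ ^ 2 ≤ ⟪x, toEuclideanCLM (𝕜 := ℝ) A x⟫ := by
  set b := hA.eigenvectorBasis
  have hb : ∀ i, ⟪b i, toEuclideanCLM (𝕜 := ℝ) A x⟫ = hA.eigenvalues i * ⟪b i, x⟫ := by
    intro i
    have hAb : toEuclideanCLM (𝕜 := ℝ) A (b i) = hA.eigenvalues i • b i :=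
      WithLp.ofLp_injective 2 (hA.mulVec_eigenvectorBasis i)
    have h := hA.isSymmetric_toEuclideanCLM (b i) x
    rw [ContinuousLinearMap.coe_coe] at h
    rw [← h]
    exact (congrArg (⟪·, x⟫) hAb).trans (real_inner_smul_left _ _ _)
  rw [← b.sum_inner_mul_inner, ← b.sum_sq_inner_right, Finset.mul_sum]
  refine Finset.sum_le_sum fun i _ => ?_
  rw [hb, real_inner_comm x, ← mul_assoc, mul_comm _ (hA.eigenvalues i), mul_assoc, ← sq]
  exact mul_le_mul_of_nonneg_right (hc i) (sq_nonneg _)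

theorem inner_toEuclideanCLM_le (y : EuclideanSpace ℝ ι) (A : Matrix ι ι ℝ)
    (z : EuclideanSpace ℝ ι) :
    ⟪y, toEuclideanCLM (𝕜 := ℝ) A z⟫ ≤ ‖y‖ * (‖toEuclideanCLM (𝕜 := ℝ) A‖ * ‖z‖) :=
  (real_inner_le_norm _ _).trans
    (mul_le_mul_of_nonneg_left ((toEuclideanCLM (𝕜 := ℝ) A).le_opNorm z) (norm_nonneg y))

theorem Matrix.PosDef.exists_mul_norm_sq_le_inner_toEuclideanCLM_le_mul_norm_sq {S : Matrix ι ι ℝ}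
    (hS : S.PosDef) :
    ∃ m > 0, ∃ M ≥ m, ∀ z : EuclideanSpace ℝ ι,
      m * ‖z‖ ^ 2 ≤ ⟪z, toEuclideanCLM (𝕜 := ℝ) S z⟫ ∧
        ⟪z, toEuclideanCLM (𝕜 := ℝ) S z⟫ ≤ M * ‖z‖ ^ 2 := by
  obtain ⟨m, hm_le, hm⟩ : ∃ m, (∀ i, m ≤ hS.1.eigenvalues i) ∧ 0 < m :=
    ((Filter.eventually_all.2 fun i =>
      (eventually_nhdsWithin_of_eventually_nhds (eventually_le_nhds (hS.eigenvalues_pos i)))).and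
        (self_mem_nhdsWithin : Ioi (0 : ℝ) ∈ 𝓝[>] 0)).exists
  -- `max` keeps `m ≤ M` also when `ι` is empty.
  refine ⟨m, hm, max ‖toEuclideanCLM (𝕜 := ℝ) S‖ m, le_max_right _ _, fun z =>
    ⟨hS.1.mul_norm_sq_le_inner_toEuclideanCLM hm_le z, ?_⟩⟩
  calc ⟪z, toEuclideanCLM (𝕜 := ℝ) S z⟫ ≤ ‖toEuclideanCLM (𝕜 := ℝ) S‖ * ‖z‖ ^ 2 :=
        (inner_toEuclideanCLM_le z S z).trans_eq (by ring)
    _ ≤ _ := by gcongr; exact le_max_left _ _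

theorem two_inner_toEuclideanCLM_mul_le_of_lyapunov {S F Q : Matrix ι ι ℝ} (hS : S.IsHermitian)
    (hQ : Q.IsHermitian) (hLyap : (-Q - (S * F + Fᵀ * S)).PosSemidef) {ω : ℝ}
    (hω : ∀ i, ω ≤ hQ.eigenvalues i) (z : EuclideanSpace ℝ ι) :
    2 * ⟪z, toEuclideanCLM (𝕜 := ℝ) S (toEuclideanCLM (𝕜 := ℝ) F z)⟫ ≤ -ω * ‖z‖ ^ 2 := by
  have hSt : Sᵀ = S := by rw [← conjTranspose_eq_transpose_of_trivial, hS.eq]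
  have hsym : 2 * (z ⬝ᵥ (S * F) *ᵥ z) = z ⬝ᵥ (S * F + Fᵀ * S) *ᵥ z := by
    rw [add_mulVec, dotProduct_add, ← mulVec_mulVec, ← mulVec_mulVec, dotProduct_transpose_mulVec,
      ← dotProduct_transpose_mulVec S, hSt, dotProduct_comm (S *ᵥ _)]
    ring
  have hL := hLyap.dotProduct_mulVec_nonneg z
  rw [star_trivial, sub_mulVec, dotProduct_sub, neg_mulVec, dotProduct_neg] at hL
  have hR := hQ.mul_norm_sq_le_inner_toEuclideanCLM hω z
  rw [inner_toEuclideanCLM] at hR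
  rw [← mul_apply_eq_comp, ← map_mul, inner_toEuclideanCLM, hsym]
  linarith

theorem two_inner_toEuclideanCLM_closedLoop_le {S Q F H : Matrix ι ι ℝ} (hS : S.IsHermitian)
    (hQ : Q.IsHermitian) (hLyap : (-Q - (S * F + Fᵀ * S)).PosSemidef) {ω₁ ω₂ σ D : ℝ}
    (hω₁ : ∀ i, ω₁ ≤ hQ.eigenvalues i) (hω₂ : 2 * ‖toEuclideanCLM (𝕜 := ℝ) (S * H)‖ ≤ ω₂)
    {z w y : EuclideanSpace ℝ ι} (hw : ‖w‖ ≤ σ * (‖z‖ + D)) (hy : ‖y‖ ≤ D) :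
    2 * ⟪z, toEuclideanCLM (𝕜 := ℝ) S
        (toEuclideanCLM (𝕜 := ℝ) F z + toEuclideanCLM (𝕜 := ℝ) H w + y)⟫ ≤
      -(ω₁ - σ * ω₂) * ‖z‖ ^ 2 + (σ * ω₂ + 2 * ‖toEuclideanCLM (𝕜 := ℝ) S‖) * ‖z‖ * D := by
  have hF := two_inner_toEuclideanCLM_mul_le_of_lyapunov hS hQ hLyap hω₁ z
  have hH : ⟪z, toEuclideanCLM (𝕜 := ℝ) S (toEuclideanCLM (𝕜 := ℝ) H w)⟫ ≤
      ‖z‖ * (‖toEuclideanCLM (𝕜 := ℝ) (S * H)‖ * ‖w‖) := by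
    rw [← mul_apply_eq_comp, ← map_mul]
    exact inner_toEuclideanCLM_le z _ w
  have hH' : 2 * ‖toEuclideanCLM (𝕜 := ℝ) (S * H)‖ * ‖z‖ * ‖w‖ ≤
      ω₂ * ‖z‖ * (σ * (‖z‖ + D)) := by
    have : 0 ≤ ω₂ := (mul_nonneg zero_le_two (norm_nonneg _)).trans hω₂
    gcongr
  have hd : ‖z‖ * (‖toEuclideanCLM (𝕜 := ℝ) S‖ * ‖y‖) ≤
      ‖z‖ * (‖toEuclideanCLM (𝕜 := ℝ) S‖ * D) := by
    gcongr
  have hy' := inner_toEuclideanCLM_le z S y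
  rw [map_add, map_add, inner_add_right, inner_add_right]
  linarith

end Matrix

theorem stmt_18_general (n : ℕ)
    (S Ω F H : Matrix (Fin n) (Fin n) ℝ) (hS : S.PosDef)
    (hLyap : (-(S * Ω * S) - (S * F + Fᵀ * S)).PosSemidef)
    (hHerm : (S * Ω * S).IsHermitian)
    (ω₁ ω₂ : ℝ)
    (hω₁ : IsLeast (Set.range hHerm.eigenvalues) ω₁)
    (hω₂ : 0 < ω₂) (hω₂H : 2 * l2opNorm (S * H) ≤ ω₂)
    (σ : ℝ) (hσ : σ ∈ Set.Ioo 0 (ω₁ / ω₂)) :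
    ∃ c₁ c₂ c₃ : ℝ, 1 ≤ c₁ ∧ 0 < c₂ ∧ 0 < c₃ ∧
      ∀ d e x : ℝ → EuclideanSpace ℝ (Fin n),
        ContinuousOn d (Set.Ici 0) →
        (∃ Cd : ℝ, ∀ t ∈ Set.Ici (0 : ℝ), ‖d t‖ ≤ Cd) →
        ContinuousOn e (Set.Ici 0) →
        (∀ t ∈ Set.Ici (0 : ℝ),
          HasDerivWithinAt x
            ((EuclideanSpace.equiv (Fin n) ℝ).symm
                (F.mulVec (x t) + H.mulVec (e t)) + d t)
            (Set.Ici 0) t) →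
        (∀ t ∈ Set.Ici (0 : ℝ),
          ‖e t‖ ≤ σ * (‖x t‖ + sSup ((fun u => ‖d u‖) '' Set.Icc 0 t))) →
        ∀ t ∈ Set.Ici (0 : ℝ),
          ‖x t‖ ≤ c₁ * Real.exp (-c₂ * t) * ‖x 0‖ +
            c₃ * sSup ((fun u => ‖d u‖) '' Set.Icc 0 t) := by
  obtain ⟨hσ, hσω⟩ := hσ
  have hα : 0 < ω₁ - σ * ω₂ := by rw [lt_div_iff₀ hω₂] at hσω; linarith
  obtain ⟨m, hm, M, hmM, hSz⟩ := hS.exists_mul_norm_sq_le_inner_toEuclideanCLM_le_mul_norm_sq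
  have hM : 0 < M := hm.trans_le hmM
  have hγ : 0 < σ * ω₂ + 2 * l2opNorm S :=
    add_pos_of_pos_of_nonneg (mul_pos hσ hω₂) (mul_nonneg zero_le_two (norm_nonneg _))
  refine ⟨√(M / m), (ω₁ - σ * ω₂) / (4 * M),
    √(M / m) * ((σ * ω₂ + 2 * l2opNorm S) / (ω₁ - σ * ω₂)),
    Real.one_le_sqrt.2 ((one_le_div hm).2 hmM), by positivity, by positivity, ?_⟩
  rintro d e x - ⟨Cd, hCd⟩ - hx he t ht
  set D := sSup ((fun u => ‖d u‖) '' Icc 0 t)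
  have hbdd : BddAbove ((fun u => ‖d u‖) '' Icc 0 t) :=
    ⟨Cd, forall_mem_image.2 fun u hu => hCd u hu.1⟩
  have hdD : ∀ s ∈ Icc 0 t, ‖d s‖ ≤ D := fun s hs => le_csSup hbdd (mem_image_of_mem _ hs)
  have heD : ∀ s ∈ Icc 0 t, ‖e s‖ ≤ σ * (‖x s‖ + D) := fun s hs =>
    (he s hs.1).trans (by
      gcongr
      exact csSup_le_csSup hbdd ⟨_, mem_image_of_mem _ ⟨le_rfl, hs.1⟩⟩
        (image_mono (Icc_subset_Icc_right hs.2)))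
  have hbound := norm_le_of_two_inner_deriv_le (γ := σ * ω₂ + 2 * l2opNorm S)
    hS.1.isSymmetric_toEuclideanCLM hm hM (fun z => (hSz z).1) (fun z => (hSz z).2) hα hγ.le
    ((norm_nonneg _).trans (hdD 0 ⟨le_rfl, ht⟩)) ht hx fun s hs =>
      two_inner_toEuclideanCLM_closedLoop_le hS.1 hHerm hLyap (fun i => hω₁.2 ⟨i, rfl⟩) hω₂H
        (heD s (Ico_subset_Icc_self hs)) (hdD s (Ico_subset_Icc_self hs))
  exact hbound.trans_eq (by ring)

theorem stmt_18 (n : ℕ) (hn : 0 < n)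
    (S Ω F H : Matrix (Fin n) (Fin n) ℝ) (hS : S.PosDef) (hΩ : Ω.PosDef)
    (hLyap : (-(S * Ω * S) - (S * F + Fᵀ * S)).PosSemidef)
    (hHerm : (S * Ω * S).IsHermitian)
    (ω₁ ω₂ : ℝ)
    (hω₁ : IsLeast (Set.range hHerm.eigenvalues) ω₁)
    (hω₂ : 0 < ω₂) (hω₂H : 2 * l2opNorm (S * H) ≤ ω₂)
    (σ : ℝ) (hσ : σ ∈ Set.Ioo 0 (ω₁ / ω₂)) :
    ∃ c₁ c₂ c₃ : ℝ, 1 ≤ c₁ ∧ 0 < c₂ ∧ 0 < c₃ ∧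
      ∀ d e x : ℝ → EuclideanSpace ℝ (Fin n),
        ContinuousOn d (Set.Ici 0) →
        (∃ Cd : ℝ, ∀ t ∈ Set.Ici (0 : ℝ), ‖d t‖ ≤ Cd) →
        ContinuousOn e (Set.Ici 0) →
        (∀ t ∈ Set.Ici (0 : ℝ),
          HasDerivWithinAt x
            ((EuclideanSpace.equiv (Fin n) ℝ).symm
                (F.mulVec (x t) + H.mulVec (e t)) + d t)
            (Set.Ici 0) t) →
        (∀ t ∈ Set.Ici (0 : ℝ),
          ‖e t‖ ≤ σ * (‖x t‖ + sSup ((fun u => ‖d u‖) '' Set.Icc 0 t))) →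
        ∀ t ∈ Set.Ici (0 : ℝ),
          ‖x t‖ ≤ c₁ * Real.exp (-c₂ * t) * ‖x 0‖ +
            c₃ * sSup ((fun u => ‖d u‖) '' Set.Icc 0 t) :=
  stmt_18_general n S Ω F H hS hLyap hHerm ω₁ ω₂ hω₁ hω₂ hω₂H σ hσ
end

section
/- Let n be a positive integer, S, Q ∈ ℝ^{n×n} with S ≻ 0 and Q ≻ 0, ρ₁ > 0 such that Q − ρ₁·S ⪰ 0, ς ∈ (0,1), and R ∈ ℝ^{n×n} an arbitrary matrix. Then there exist μ > 0 and σ > 0 such that μ·[[−Q + ς·ρ₁·S, R],[Rᵀ, 0]] − [[−σ²·I, 0],[0, I]] ⪯ 0. -/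
/-!
With `P = Q - (ς ρ₁) S = (Q - ρ₁ S) + (1 - ς) ρ₁ S ≻ 0` we have `ε I ⪯ P` and `R Rᵀ ⪯ c I` for some
`ε > 0`, `c ≥ 0`. Take `σ = μ = ε / (1 + c)`. The matrix in question is
`[[μ P - μ² I, -μ R], [-μ Rᵀ, I]]`, whose Schur complement with respect to the identity block is
`μ P - μ² (I + R Rᵀ) = μ (P - ε I) + μ² (c I - R Rᵀ) ⪰ 0`.
-/

open Matrix

namespace Matrix

variable {𝕜 n : Type*} [RCLike 𝕜]

open scoped ComplexOrder

theorem posDef_sub_smul_of_lt {S Q : Matrix n n 𝕜} {a b : ℝ} (hS : S.PosDef)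
    (hQS : (Q - b • S).PosSemidef) (hab : a < b) : (Q - a • S).PosDef := by
  have h : Q - a • S = (Q - b • S) + (b - a) • S := by module
  rw [h]
  exact PosDef.posSemidef_add hQS (hS.smul (sub_pos.2 hab))

variable [DecidableEq n]

theorem posSemidef_smul_sub_sq_smul_one_add {P B : Matrix n n 𝕜} {ε c μ : ℝ}
    (hP : (P - ε • (1 : Matrix n n 𝕜)).PosSemidef) (hB : (c • (1 : Matrix n n 𝕜) - B).PosSemidef)
    (hμ : 0 ≤ μ) (hμε : μ * (1 + c) = ε) : (μ • P - μ ^ 2 • (1 + B)).PosSemidef := by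
  have h : μ • P - μ ^ 2 • (1 + B) = μ • (P - ε • 1) + μ ^ 2 • (c • 1 - B) := by
    rw [← hμε]
    module
  rw [h]
  exact (hP.smul hμ).add (hB.smul (sq_nonneg μ))

variable [Fintype n]

theorem posSemidef_fromBlocks_one_iff {m : Type*} [Fintype m] (A : Matrix m m 𝕜)
    (B : Matrix m n 𝕜) : (fromBlocks A B Bᴴ 1).PosSemidef ↔ (A - B * Bᴴ).PosSemidef := by
  let : Invertible (1 : Matrix n n 𝕜) := invertibleOne
  rw [PosDef.one.fromBlocks₂₂, inv_one, Matrix.mul_one]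

open scoped MatrixOrder

theorem PosDef.exists_pos_posSemidef_sub_smul_one {A : Matrix n n 𝕜} (hA : A.PosDef) :
    ∃ ε : ℝ, 0 < ε ∧ (A - ε • (1 : Matrix n n 𝕜)).PosSemidef := by
  rcases subsingleton_or_nontrivial (Matrix n n 𝕜) with _ | _
  · exact ⟨1, one_pos, by rw [Subsingleton.elim (A - _) 0]; exact .zero⟩
  · obtain ⟨ε, hε, hεA⟩ := (CFC.exists_pos_algebraMap_le_iff hA.isHermitian.isSelfAdjoint).2
      fun _ hx ↦ hA.isStrictlyPositive.spectrum_pos hx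
    rw [le_iff, Algebra.algebraMap_eq_smul_one] at hεA
    exact ⟨ε, hε, hεA⟩

theorem IsHermitian.exists_nonneg_posSemidef_smul_one_sub {A : Matrix n n 𝕜}
    (hA : A.IsHermitian) : ∃ c : ℝ, 0 ≤ c ∧ (c • (1 : Matrix n n 𝕜) - A).PosSemidef := by
  obtain ⟨c, hc⟩ := (finite_real_spectrum (A := A)).bddAbove
  have hAc : A ≤ algebraMap ℝ _ (max c 0) :=
    le_algebraMap_of_spectrum_le (fun _ hx ↦ (hc hx).trans (le_max_left _ _)) hA.isSelfAdjoint
  rw [le_iff, Algebra.algebraMap_eq_smul_one] at hAc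
  exact ⟨max c 0, le_max_right _ _, hAc⟩

end Matrix

theorem stmt_19_general (n : ℕ)
    (S Q : Matrix (Fin n) (Fin n) ℝ) (hS : S.PosDef)
    (ρ₁ : ℝ) (hρ₁ : 0 < ρ₁) (hQS : (Q - ρ₁ • S).PosSemidef)
    (ς : ℝ) (hς : ς ∈ Set.Ioo (0 : ℝ) 1)
    (R : Matrix (Fin n) (Fin n) ℝ) :
    ∃ μ σ : ℝ, 0 < μ ∧ 0 < σ ∧
      (-(μ • Matrix.fromBlocks (-Q + (ς * ρ₁) • S) R Rᵀ
            (0 : Matrix (Fin n) (Fin n) ℝ) -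
          Matrix.fromBlocks ((-(σ ^ 2)) • (1 : Matrix (Fin n) (Fin n) ℝ)) 0 0
            (1 : Matrix (Fin n) (Fin n) ℝ))).PosSemidef := by
  have hP : (Q - (ς * ρ₁) • S).PosDef :=
    posDef_sub_smul_of_lt hS hQS (mul_lt_of_lt_one_left hρ₁ hς.2)
  obtain ⟨ε, hε, hPε⟩ := hP.exists_pos_posSemidef_sub_smul_one
  obtain ⟨c, hc, hRc⟩ :=
    (isHermitian_mul_conjTranspose_self R).exists_nonneg_posSemidef_smul_one_sub
  set μ := ε / (1 + c)
  have hμ : 0 < μ := by positivity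
  refine ⟨μ, μ, hμ, hμ, ?_⟩
  have hblocks : -(μ • fromBlocks (-Q + (ς * ρ₁) • S) R Rᵀ 0 - fromBlocks (-(μ ^ 2) • 1) 0 0 1) =
      fromBlocks (μ • (Q - (ς * ρ₁) • S) - μ ^ 2 • 1) (-(μ • R)) (-(μ • R))ᴴ 1 := by
    rw [fromBlocks_smul, sub_eq_add_neg, fromBlocks_neg, fromBlocks_add, fromBlocks_neg]
    congr 1
    · module
    · simp
    · simp [conjTranspose_eq_transpose_of_trivial]
    · simp
  rw [hblocks, posSemidef_fromBlocks_one_iff]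
  convert posSemidef_smul_sub_sq_smul_one_add hPε hRc hμ.le (div_mul_cancel₀ _ (by positivity))
    using 1
  simp only [conjTranspose_neg, conjTranspose_smul, star_trivial, neg_mul_neg, Matrix.smul_mul,
    Matrix.mul_smul]
  module

theorem stmt_19 (n : ℕ) (hn : 0 < n)
    (S Q : Matrix (Fin n) (Fin n) ℝ) (hS : S.PosDef) (hQ : Q.PosDef)
    (ρ₁ : ℝ) (hρ₁ : 0 < ρ₁) (hQS : (Q - ρ₁ • S).PosSemidef)
    (ς : ℝ) (hς : ς ∈ Set.Ioo (0 : ℝ) 1)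
    (R : Matrix (Fin n) (Fin n) ℝ) :
    ∃ μ σ : ℝ, 0 < μ ∧ 0 < σ ∧
      (-(μ • Matrix.fromBlocks (-Q + (ς * ρ₁) • S) R Rᵀ
            (0 : Matrix (Fin n) (Fin n) ℝ) -
          Matrix.fromBlocks ((-(σ ^ 2)) • (1 : Matrix (Fin n) (Fin n) ℝ)) 0 0
            (1 : Matrix (Fin n) (Fin n) ℝ))).PosSemidef :=
  stmt_19_general n S Q hS ρ₁ hρ₁ hQS ς hς R
end
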